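/- arXiv:1808.04221 — 7 statements merged into one kernel-verified Lean document; each statement's English description precedes it below -/
import Mathlib

section
/- Let ν be a strict partition and fix an integer a with 1 ≤ a ≤ ℓ(ν). Let (α,β) and (α′,β′) be pairs of partitions satisfying ℓ(α) < a, β₁ < ν_a, ℓ(α′) < a, and β′₁ < ν_a. If the extension of ν by (α,β) equals the extension of ν by (α′,β′), then α = α′ and β = β′. -/
/-- `μ : ℕ → ℕ` represents a partition via its parts `μ 1 ≥ μ 2 ≥ ⋯`; the index `0` is
unused and required to be `0`.  The parts are weakly decreasing and only finitely many
are nonzero. -/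
def IsPartition (μ : ℕ → ℕ) : Prop :=
  μ 0 = 0 ∧ (∀ i, 1 ≤ i → μ (i + 1) ≤ μ i) ∧ {i | μ i ≠ 0}.Finite

/-- The weight `|μ|` of a partition: the sum of its parts. -/
noncomputable def pweight (μ : ℕ → ℕ) : ℕ := ∑ᶠ i, μ i

/-- The length `ℓ(μ)`: the number of nonzero parts. -/
noncomputable def plength (μ : ℕ → ℕ) : ℕ := Set.ncard {i | 1 ≤ i ∧ μ i ≠ 0}

/-- A partition is strict if its nonzero parts are pairwise distinct. -/
def IsStrict (μ : ℕ → ℕ) : Prop := ∀ i j, 1 ≤ i → i < j → μ j ≠ 0 → μ j < μ i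

/-- `(i, j)` is a cell of the Ferrers board of `μ`. -/
def Cell (μ : ℕ → ℕ) (i j : ℕ) : Prop := 1 ≤ i ∧ 1 ≤ j ∧ j ≤ μ i

/-- The Ferrers board of `μ` as a set of cells. -/
def Board (μ : ℕ → ℕ) : Set (ℕ × ℕ) := {p | Cell μ p.1 p.2}

/-- The number of ways to place `k` non-attacking rooks on the Ferrers board of `μ`,
i.e. the number of `k`-element subsets of the board whose cells have pairwise distinct
row indices and pairwise distinct column indices. -/
noncomputable def rookCount (μ : ℕ → ℕ) (k : ℕ) : ℕ :=
  Set.ncard {s : Finset (ℕ × ℕ) | s.card = k ∧ (∀ p ∈ s, Cell μ p.1 p.2) ∧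
    ∀ p ∈ s, ∀ q ∈ s, p ≠ q → p.1 ≠ q.1 ∧ p.2 ≠ q.2}

/-- Rook equivalence of partitions. -/
def RookEquiv (μ ν : ℕ → ℕ) : Prop := ∀ k, rookCount μ k = rookCount ν k

/-- `α` contains `μ` as a pattern: there are strictly increasing functions `f, g` on the
positive integers such that `(i, j)` is a cell of `μ` iff `(f i, g j)` is a cell of `α`. -/
def Contains (α μ : ℕ → ℕ) : Prop :=
  ∃ f g : ℕ → ℕ,
    (∀ i, 1 ≤ i → 1 ≤ f i) ∧ (∀ j, 1 ≤ j → 1 ≤ g j) ∧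
    (∀ i j, 1 ≤ i → i < j → f i < f j) ∧
    (∀ i j, 1 ≤ i → i < j → g i < g j) ∧
    (∀ i j, 1 ≤ i → 1 ≤ j → (Cell μ i j ↔ Cell α (f i) (g j)))

/-- `P_n(μ)`: the set of partitions of `n` containing `μ`. -/
def PnSet (n : ℕ) (μ : ℕ → ℕ) : Set (ℕ → ℕ) :=
  {α | IsPartition α ∧ pweight α = n ∧ Contains α μ}

/-- `P_n(μ, k)`: the members of `P_n(μ)` whose first part is `k + μ 1`. -/
def PnSetK (n : ℕ) (μ : ℕ → ℕ) (k : ℕ) : Set (ℕ → ℕ) :=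
  {α | α ∈ PnSet n μ ∧ α 1 = k + μ 1}

/-- Wilf equivalence of partitions. -/
def WilfEquiv (μ ν : ℕ → ℕ) : Prop :=
  ∀ n, 1 ≤ n → (PnSet n μ).ncard = (PnSet n ν).ncard

/-- The multiplicity of `v` among the parts `μ 1, μ 2, …` of `μ`. -/
noncomputable def partCount (μ : ℕ → ℕ) (v : ℕ) : ℕ := Set.ncard {i | 1 ≤ i ∧ μ i = v}

/-- `γ` is the extension of `ν` by the pair `(α, β)`: `γ` is a partition whose multiset of
nonzero parts is the multiset union of the nonzero parts of `ν + α` and those of `β`. -/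
def IsExtension (ν α β γ : ℕ → ℕ) : Prop :=
  IsPartition γ ∧
  ∀ v, 1 ≤ v → partCount γ v = partCount (fun i => ν i + α i) v + partCount β v

/-- `ν` is the `(i, j)`-transform of `μ`: the board of `ν` is obtained from the board of
`μ` by replacing the subboard of cells weakly southeast of `(i, j)` by its conjugate. -/
def IsTransform (i j : ℕ) (μ ν : ℕ → ℕ) : Prop :=
  IsPartition μ ∧ IsPartition ν ∧ 1 ≤ i ∧ 1 ≤ j ∧
  Board ν = (Board μ \ {p ∈ Board μ | i ≤ p.1 ∧ j ≤ p.2}) ∪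
    (fun p : ℕ × ℕ => (i + (p.2 - j), j + (p.1 - i))) '' {p ∈ Board μ | i ≤ p.1 ∧ j ≤ p.2}

/-- One step: `ν` is an `(i, 1)`-transform of `μ` for some `i`. -/
def TransformRel1 (μ ν : ℕ → ℕ) : Prop := ∃ i, IsTransform i 1 μ ν

/-- `(i, 1)`-equivalence: a finite (possibly empty) sequence of `(i, 1)`-transformations. -/
def TransformEquiv1 : (ℕ → ℕ) → (ℕ → ℕ) → Prop := Relation.ReflTransGen TransformRel1

/-- One step: `ν` is an `(i, j)`-transform of `μ` for some `i, j`. -/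
def TransformRel (μ ν : ℕ → ℕ) : Prop := ∃ i j, IsTransform i j μ ν

/-- Differing by a finite sequence of `(i, j)`-transformations. -/
def TransformEquiv : (ℕ → ℕ) → (ℕ → ℕ) → Prop := Relation.ReflTransGen TransformRel

/-- Row `i` of `μ` is salient if `i + μ i ≥ j + μ j` for some `j > i`. -/
def Salient (μ : ℕ → ℕ) (i : ℕ) : Prop := ∃ j, i < j ∧ j + μ j ≤ i + μ i

/-- The multiplicity of `v` in the multiset `S_μ = {i + μ i : row i of μ is salient}`. -/
noncomputable def salientCount (μ : ℕ → ℕ) (v : ℕ) : ℕ :=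
  Set.ncard {i | 1 ≤ i ∧ Salient μ i ∧ i + μ i = v}

/-- The staircase rank of `μ`: the largest `k` with `μ i ≥ k - i + 1` for `1 ≤ i ≤ k`. -/
noncomputable def staircaseRank (μ : ℕ → ℕ) : ℕ :=
  sSup {k | ∀ i, 1 ≤ i → i ≤ k → k + 1 ≤ μ i + i}

/-- The number of cells of the L in `μ` with corner `p = (i, j)`: the cells `(i, x)` of `μ`
with `x ≥ j` together with the cells `(y, j)` with `1 ≤ y ≤ i`. -/
def LWeight (μ : ℕ → ℕ) (p : ℕ × ℕ) : ℕ := (μ p.1 - p.2) + p.1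

/-- `c` lists the corners of a nested sequence of `k` L's in `μ`: each corner is a cell of
`μ`, and later corners are strictly above and strictly to the right of earlier ones. -/
def IsNested (μ : ℕ → ℕ) {k : ℕ} (c : Fin k → ℕ × ℕ) : Prop :=
  (∀ a, Cell μ (c a).1 (c a).2) ∧
  ∀ a b : Fin k, a < b → (c b).1 < (c a).1 ∧ (c a).2 < (c b).2

/-- `w_k(μ)`: the maximum weight of a sequence of `k` nested L's in `μ`
(`0` if there is no such sequence). -/
noncomputable def nestedLMax (μ : ℕ → ℕ) (k : ℕ) : ℕ :=
  sSup {w | ∃ c : Fin k → ℕ × ℕ, IsNested μ c ∧ ∑ a, LWeight μ (c a) = w}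

/-!
Rows `i < a` of `ν` and of `ν + α` have length at least `ν_a`, while `α_i = 0` for `i ≥ a`
because `ℓ(α) < a`; so the parts of `ν + α` below `ν_a` are exactly those of `ν`. The parts
of `γ` of size at least `ν_a` all come from `ν + α`, because `β₁ < ν_a`. Hence `ν + α` and
`ν + α'` have the same multiset of parts, so they coincide and `α = α'`; cancelling `ν + α`
from the parts of `γ` then gives `β = β'`. A partition is recovered from its multiplicities
through the conjugate: `μ_i ≥ v` iff `i ≤ #{j | μ_j ≥ v}`.
-/

section

variable {μ σ : ℕ → ℕ}

theorem IsPartition.le_of_le (hμ : IsPartition μ) {i j : ℕ} (hi : 1 ≤ i) (hij : i ≤ j) :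
    μ j ≤ μ i := by
  induction j, hij using Nat.le_induction with
  | base => rfl
  | succ j hij ih => exact (hμ.2.1 j (hi.trans hij)).trans ih

theorem IsPartition.add (hμ : IsPartition μ) (hσ : IsPartition σ) :
    IsPartition (fun i => μ i + σ i) := by
  refine ⟨by simp [hμ.1, hσ.1], fun i hi => add_le_add (hμ.2.1 i hi) (hσ.2.1 i hi), ?_⟩
  refine (hμ.2.2.union hσ.2.2).subset fun i hi => ?_
  simp only [Set.mem_ofPred_eq, Set.mem_union] at hi ⊢
  omega

/-- The rows of `μ` of length at least `v`, so that `(rowsGe μ v).ncard` is the `v`-th part of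
the conjugate of `μ`. -/
def rowsGe (μ : ℕ → ℕ) (v : ℕ) : Set ℕ := {j | 1 ≤ j ∧ v ≤ μ j}

theorem rowsGe_finite (hμ : IsPartition μ) {v : ℕ} (hv : 1 ≤ v) : (rowsGe μ v).Finite :=
  hμ.2.2.subset fun j hj => by
    simp only [rowsGe, Set.mem_ofPred_eq] at hj ⊢
    omega

theorem Icc_subset_rowsGe (hμ : IsPartition μ) {v i : ℕ} (hi : i ∈ rowsGe μ v) :
    Set.Icc 1 i ⊆ rowsGe μ v :=
  fun _ hj => ⟨hj.1, hi.2.trans (hμ.le_of_le hj.1 hj.2)⟩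

theorem le_ncard_rowsGe (hμ : IsPartition μ) {v i : ℕ} (hv : 1 ≤ v) (hi : i ∈ rowsGe μ v) :
    i ≤ (rowsGe μ v).ncard := by
  simpa using Set.ncard_le_ncard (Icc_subset_rowsGe hμ hi) (rowsGe_finite hμ hv)

theorem mem_rowsGe_of_le_ncard (hμ : IsPartition μ) {v i : ℕ} (hi : 1 ≤ i)
    (hle : i ≤ (rowsGe μ v).ncard) : i ∈ rowsGe μ v := by
  by_contra hnot
  have hsub : rowsGe μ v ⊆ Set.Icc 1 (i - 1) := fun j hj => by
    refine ⟨hj.1, Nat.le_sub_one_of_lt (lt_of_not_ge fun hij => hnot ?_)⟩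
    exact Icc_subset_rowsGe hμ hj ⟨hi, hij⟩
  have := Set.ncard_le_ncard hsub (Set.finite_Icc 1 (i - 1))
  simp only [Set.ncard_Icc_nat] at this
  omega

theorem rowsGe_eq_empty (hμ : IsPartition μ) {v : ℕ} (hv : μ 1 < v) : rowsGe μ v = ∅ :=
  Set.eq_empty_of_forall_notMem fun j hj => by
    have := hμ.le_of_le le_rfl hj.1
    exact absurd hj.2 (by omega)

theorem ncard_rowsGe_eq_add (hμ : IsPartition μ) {v : ℕ} (hv : 1 ≤ v) :
    (rowsGe μ v).ncard = (rowsGe μ (v + 1)).ncard + partCount μ v := by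
  have hsplit : rowsGe μ v = rowsGe μ (v + 1) ∪ {j | 1 ≤ j ∧ μ j = v} := by
    ext j
    simp only [rowsGe, Set.mem_union, Set.mem_ofPred_eq]
    omega
  have hdisj : Disjoint (rowsGe μ (v + 1)) {j | 1 ≤ j ∧ μ j = v} :=
    Set.disjoint_left.2 fun j hj hj' => by
      simp only [rowsGe, Set.mem_ofPred_eq] at hj hj'
      omega
  rw [hsplit, Set.ncard_union_eq hdisj (rowsGe_finite hμ (by omega))
    ((rowsGe_finite hμ hv).subset fun j hj => ⟨hj.1, hj.2.ge⟩)]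
  rfl

theorem ncard_rowsGe_eq_of_partCount_eq (hμ : IsPartition μ) (hσ : IsPartition σ)
    (h : ∀ v, 1 ≤ v → partCount μ v = partCount σ v) {v : ℕ} (hv : 1 ≤ v) :
    (rowsGe μ v).ncard = (rowsGe σ v).ncard := by
  refine Nat.decreasingInduction' (P := fun k => (rowsGe μ k).ncard = (rowsGe σ k).ncard)
    (fun k _ hvk ih => ?_) (Nat.le_add_left v (max (μ 1) (σ 1) + 1)) ?_
  · rw [ncard_rowsGe_eq_add hμ (hv.trans hvk), ncard_rowsGe_eq_add hσ (hv.trans hvk), ih,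
      h k (hv.trans hvk)]
  · rw [rowsGe_eq_empty hμ (by omega), rowsGe_eq_empty hσ (by omega)]

theorem IsPartition.le_of_ncard_rowsGe_le (hμ : IsPartition μ) (hσ : IsPartition σ)
    (hrows : ∀ v, 1 ≤ v → (rowsGe μ v).ncard ≤ (rowsGe σ v).ncard) {i : ℕ} (hi : 1 ≤ i) :
    μ i ≤ σ i := by
  rcases Nat.eq_zero_or_pos (μ i) with h0 | hpos
  · omega
  have hi_le := (le_ncard_rowsGe hμ hpos ⟨hi, le_rfl⟩).trans (hrows _ hpos)
  exact (mem_rowsGe_of_le_ncard hσ hi hi_le).2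

theorem eq_of_partCount_eq (hμ : IsPartition μ) (hσ : IsPartition σ)
    (h : ∀ v, 1 ≤ v → partCount μ v = partCount σ v) : μ = σ := by
  have hrows := fun v (hv : 1 ≤ v) => ncard_rowsGe_eq_of_partCount_eq hμ hσ h hv
  funext i
  rcases Nat.eq_zero_or_pos i with rfl | hi
  · rw [hμ.1, hσ.1]
  exact le_antisymm (hμ.le_of_ncard_rowsGe_le hσ (fun v hv => (hrows v hv).le) hi)
    (hσ.le_of_ncard_rowsGe_le hμ (fun v hv => (hrows v hv).ge) hi)

theorem plength_eq_ncard_rowsGe (μ : ℕ → ℕ) : plength μ = (rowsGe μ 1).ncard := by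
  simp only [plength, rowsGe, Nat.one_le_iff_ne_zero]

theorem IsPartition.eq_zero_of_plength_lt (hμ : IsPartition μ) {a i : ℕ} (hlen : plength μ < a)
    (hi : a ≤ i) : μ i = 0 := by
  by_contra hne
  have hi1 : 1 ≤ i := Nat.one_le_iff_ne_zero.2 fun h0 => hne (h0 ▸ hμ.1)
  have := le_ncard_rowsGe hμ le_rfl ⟨hi1, Nat.one_le_iff_ne_zero.2 hne⟩
  rw [← plength_eq_ncard_rowsGe] at this
  omega

theorem partCount_eq_zero_of_lt (hμ : IsPartition μ) {v : ℕ} (hv : μ 1 < v) :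
    partCount μ v = 0 := by
  have hsub : {i | 1 ≤ i ∧ μ i = v} ⊆ rowsGe μ v := fun _ hi => ⟨hi.1, hi.2.ge⟩
  rw [rowsGe_eq_empty hμ hv, Set.subset_empty_iff] at hsub
  rw [partCount, hsub, Set.ncard_empty]

theorem partCount_add_eq_of_lt (hμ : IsPartition μ) {a v : ℕ} (hσ : ∀ i, a ≤ i → σ i = 0)
    (hv : v < μ a) : partCount (fun i => μ i + σ i) v = partCount μ v := by
  unfold partCount
  congr 1
  ext i
  refine and_congr_right fun hi => ?_
  dsimp only
  rcases le_or_gt a i with hai | hia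
  · rw [hσ i hai, add_zero]
  · have := hμ.le_of_le hi hia.le
    constructor <;> intro <;> omega

end

theorem extension_unique_general (ν : ℕ → ℕ) (hν : IsPartition ν)
    (a : ℕ)
    (α β α' β' γ : ℕ → ℕ)
    (hα : IsPartition α) (hβ : IsPartition β)
    (hα' : IsPartition α') (hβ' : IsPartition β')
    (hlα : plength α < a) (hbβ : β 1 < ν a)
    (hlα' : plength α' < a) (hbβ' : β' 1 < ν a)
    (h : IsExtension ν α β γ) (h' : IsExtension ν α' β' γ) :
    α = α' ∧ β = β' := by
  have hsum : ∀ v, 1 ≤ v →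
      partCount (fun i => ν i + α i) v = partCount (fun i => ν i + α' i) v := by
    intro v hv
    rcases lt_or_ge v (ν a) with hlt | hge
    · rw [partCount_add_eq_of_lt hν (fun _ => hα.eq_zero_of_plength_lt hlα) hlt,
        partCount_add_eq_of_lt hν (fun _ => hα'.eq_zero_of_plength_lt hlα') hlt]
    · have hγ := h.2 v hv
      have hγ' := h'.2 v hv
      rw [partCount_eq_zero_of_lt hβ (by omega)] at hγ
      rw [partCount_eq_zero_of_lt hβ' (by omega)] at hγ'
      omega
  have hνα : (fun i => ν i + α i) = fun i => ν i + α' i :=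
    eq_of_partCount_eq (hν.add hα) (hν.add hα') hsum
  have hαα' : α = α' := funext fun i => Nat.add_left_cancel (congrFun hνα i)
  subst hαα'
  refine ⟨rfl, eq_of_partCount_eq hβ hβ' fun v hv => ?_⟩
  have := h.2 v hv
  have := h'.2 v hv
  omega

theorem extension_unique (ν : ℕ → ℕ) (hν : IsPartition ν) (hνs : IsStrict ν)
    (a : ℕ) (ha1 : 1 ≤ a) (ha2 : a ≤ plength ν)
    (α β α' β' γ : ℕ → ℕ)
    (hα : IsPartition α) (hβ : IsPartition β)
    (hα' : IsPartition α') (hβ' : IsPartition β')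
    (hlα : plength α < a) (hbβ : β 1 < ν a)
    (hlα' : plength α' < a) (hbβ' : β' 1 < ν a)
    (h : IsExtension ν α β γ) (h' : IsExtension ν α' β' γ) :
    α = α' ∧ β = β' :=
  extension_unique_general ν hν a α β α' β' γ hα hβ hα' hβ' hlα hbβ hlα' hbβ' h h'
end

section
/- Let μ and ν be distinct strict partitions of n, let r be the largest index with μ_r ≠ ν_r (such r exists and r > 1 since |μ| = |ν|), assume μ_r < ν_r, and set m = r + ν_r. Fix pairs of partitions (α,β) and (α′,β′) such that α₁ = α′₁ = k and |α| + |β| = |α′| + |β′| = ν_r + (r − 1). If the extension of ν by (α,β) equals the extension of ν by (α′,β′), then the extension of μ by (α,β) equals the extension of μ by (α′,β′). -/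
/-!
Comparing the conjugate partitions of the two extensions of `ν` row by row shows that `α` and
`α'` agree on the first `r` rows: if `i ≤ r` were the first row with `α i < α' i`, then `β`
would need a part of size at least `ν i + α' i ≥ ν r + (r - i) + 1`, while the rows above `i`
already contribute `i - 1` to `|α|`, exceeding the weight `ν r + (r - 1)`. Below row `r`, `μ`
and `ν` coincide, so passing from `ν` to `μ` changes both extensions by the same parts.
-/

open Function

noncomputable def conjugate (f : ℕ → ℕ) (v : ℕ) : ℕ := Set.ncard {i | 1 ≤ i ∧ v ≤ f i}

lemma sum_le_pweight {f : ℕ → ℕ} (hf : (support f).Finite) (s : Finset ℕ) :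
    ∑ i ∈ s, f i ≤ pweight f := by
  classical
  calc ∑ i ∈ s, f i ≤ ∑ i ∈ s ∪ hf.toFinset, f i :=
        Finset.sum_le_sum_of_subset Finset.subset_union_left
    _ = pweight f :=
        (finsum_eq_sum_of_support_subset f (by simp)).symm

lemma finite_setOf_le {f : ℕ → ℕ} (hf : (support f).Finite) {v : ℕ} (hv : 1 ≤ v) :
    {i | 1 ≤ i ∧ v ≤ f i}.Finite :=
  hf.subset fun i hi => by simp only [Set.mem_ofPred_eq, mem_support] at hi ⊢; omega

lemma conjugate_eq_partCount_add {f : ℕ → ℕ} (hf : (support f).Finite) {v : ℕ} (hv : 1 ≤ v) :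
    conjugate f v = partCount f v + conjugate f (v + 1) := by
  have hsplit : {i | 1 ≤ i ∧ v ≤ f i} = {i | 1 ≤ i ∧ f i = v} ∪ {i | 1 ≤ i ∧ v + 1 ≤ f i} := by
    ext i; simp only [Set.mem_ofPred_eq, Set.mem_union]; omega
  have hdisj : Disjoint {i | 1 ≤ i ∧ f i = v} {i | 1 ≤ i ∧ v + 1 ≤ f i} :=
    Set.disjoint_left.mpr fun i h₁ h₂ => by simp only [Set.mem_ofPred_eq] at h₁ h₂; omega
  have hfin : {i | 1 ≤ i ∧ f i = v}.Finite :=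
    (finite_setOf_le hf hv).subset fun i hi => by simp only [Set.mem_ofPred_eq] at hi ⊢; omega
  rw [conjugate, hsplit, Set.ncard_union_eq hdisj hfin (finite_setOf_le hf (by omega))]
  rfl

namespace IsPartition

variable {f g : ℕ → ℕ}

lemma antitone (hf : IsPartition f) {i j : ℕ} (hi : 1 ≤ i) (hij : i ≤ j) : f j ≤ f i := by
  induction j, hij using Nat.le_induction with
  | base => exact le_rfl
  | succ j hij ih => exact (hf.2.1 j (hi.trans hij)).trans ih

lemma add_s6 (hf : IsPartition f) (hg : IsPartition g) : IsPartition (fun i => f i + g i) := by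
  refine ⟨by simp [hf.1, hg.1], fun i hi => add_le_add (hf.2.1 i hi) (hg.2.1 i hi), ?_⟩
  exact (hf.2.2.union hg.2.2).subset fun i hi => by
    simp only [Set.mem_ofPred_eq, Set.mem_union] at hi ⊢; omega

lemma le_conjugate_iff (hf : IsPartition f) {v i : ℕ} (hv : 1 ≤ v) (hi : 1 ≤ i) :
    v ≤ f i ↔ i ≤ conjugate f v := by
  constructor
  · intro hfi
    have hsub : (Finset.Icc 1 i : Set ℕ) ⊆ {j | 1 ≤ j ∧ v ≤ f j} := fun j hj => by
      rw [Finset.coe_Icc, Set.mem_Icc] at hj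
      exact ⟨hj.1, hfi.trans (hf.antitone hj.1 hj.2)⟩
    simpa [conjugate] using Set.ncard_le_ncard hsub (finite_setOf_le hf.2.2 hv)
  · intro hcnt
    by_contra! hfi
    have hsub : {j | 1 ≤ j ∧ v ≤ f j} ⊆ (Finset.Ico 1 i : Set ℕ) := fun j hj => by
      rw [Finset.coe_Ico, Set.mem_Ico]
      refine ⟨hj.1, lt_of_not_ge fun hij => ?_⟩
      have := hj.2
      have := hf.antitone hi hij
      omega
    have := Set.ncard_le_ncard hsub (Finset.finite_toSet _)
    rw [Set.ncard_coe_finset, Nat.card_Ico] at this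
    exact absurd (hcnt.trans this) (by omega)

lemma conjugate_eq_zero (hf : IsPartition f) {v : ℕ} (hv : f 1 < v) : conjugate f v = 0 := by
  rw [conjugate, Set.ncard_eq_zero (finite_setOf_le hf.2.2 (by omega))]
  ext i
  simp only [Set.mem_ofPred_eq, Set.mem_empty_iff_false, iff_false, not_and]
  intro hi
  have := hf.antitone le_rfl hi
  omega

end IsPartition

lemma conjugate_add_eq_of_partCount_add_eq {f g f' g' : ℕ → ℕ} (hf : IsPartition f)
    (hg : IsPartition g) (hf' : IsPartition f') (hg' : IsPartition g')
    (hpc : ∀ v, 1 ≤ v → partCount f v + partCount g v = partCount f' v + partCount g' v)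
    {v : ℕ} (hv : 1 ≤ v) : conjugate f v + conjugate g v = conjugate f' v + conjugate g' v := by
  set N := f 1 + g 1 + f' 1 + g' 1 + 1
  suffices ∀ d v, 1 ≤ v → N ≤ v + d →
      conjugate f v + conjugate g v = conjugate f' v + conjugate g' v from this N v hv (by omega)
  intro d
  induction d with
  | zero =>
    intro v _ hNv
    rw [hf.conjugate_eq_zero (by omega), hg.conjugate_eq_zero (by omega),
      hf'.conjugate_eq_zero (by omega), hg'.conjugate_eq_zero (by omega)]
  | succ d ih =>
    intro v hv hNv
    rw [conjugate_eq_partCount_add hf.2.2 hv, conjugate_eq_partCount_add hg.2.2 hv,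
      conjugate_eq_partCount_add hf'.2.2 hv, conjugate_eq_partCount_add hg'.2.2 hv]
    have := hpc v hv
    have := ih (v + 1) (by omega) (by omega)
    omega

lemma IsPartition.eq_of_partCount_eq {f g : ℕ → ℕ} (hf : IsPartition f) (hg : IsPartition g)
    (hpc : ∀ v, 1 ≤ v → partCount f v = partCount g v) : f = g := by
  have hzero : IsPartition (fun _ => 0) := ⟨rfl, fun _ _ => le_rfl, by simp⟩
  have hpc0 : ∀ v, 1 ≤ v → partCount (fun _ => 0) v = 0 := fun v hv => by
    simp [partCount, show (0 : ℕ) ≠ v by omega]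
  funext i
  rcases Nat.eq_zero_or_pos i with rfl | hi
  · rw [hf.1, hg.1]
  have hle : ∀ v, 1 ≤ v → (v ≤ f i ↔ v ≤ g i) := fun v hv => by
    have := conjugate_add_eq_of_partCount_add_eq hf hzero hg hzero
      (fun w hw => by rw [hpc0 w hw, hpc w hw]) hv
    rw [hzero.conjugate_eq_zero (by omega)] at this
    rw [hf.le_conjugate_iff hv hi, hg.le_conjugate_iff hv hi]
    omega
  have := hle (f i + 1) (by omega)
  have := hle (g i + 1) (by omega)
  omega

lemma IsStrict.add_sub_le {ν : ℕ → ℕ} (hν : IsStrict ν) {i j : ℕ} (hi : 1 ≤ i) (hij : i ≤ j)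
    (hνj : ν j ≠ 0) : ν j + (j - i) ≤ ν i := by
  induction j, hij using Nat.le_induction with
  | base => omega
  | succ j hij ih =>
    have hlt := hν j (j + 1) (hi.trans hij) (Nat.lt_succ_self j) hνj
    have := ih (by omega)
    omega

lemma le_of_conjugate_add_eq {f f' β β' : ℕ → ℕ} (hf : IsPartition f) (hf' : IsPartition f')
    (hβ : IsPartition β) {i : ℕ} (hi : 1 ≤ i) (hlt : f i < f' i)
    (hconj : conjugate f (f' i) + conjugate β (f' i) =
      conjugate f' (f' i) + conjugate β' (f' i)) :
    f' i ≤ β 1 := by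
  have hv : 1 ≤ f' i := by omega
  have hf'i : i ≤ conjugate f' (f' i) := (hf'.le_conjugate_iff hv hi).mp le_rfl
  have hfi : ¬ i ≤ conjugate f (f' i) := fun h => by
    have := (hf.le_conjugate_iff hv hi).mpr h
    omega
  exact (hβ.le_conjugate_iff hv le_rfl).mpr (by omega)

lemma lt_pweight_add_of_lt {ν α β α' β' : ℕ → ℕ} {r i : ℕ} (hν : IsPartition ν)
    (hνs : IsStrict ν) (hνr : ν r ≠ 0) (hα : IsPartition α) (hβ : IsPartition β)
    (hα' : IsPartition α')
    (hconj : ∀ v, 1 ≤ v → conjugate (fun j => ν j + α j) v + conjugate β v =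
      conjugate (fun j => ν j + α' j) v + conjugate β' v)
    (hi : 1 ≤ i) (hir : i ≤ r) (hprev : ∀ j, 1 ≤ j → j < i → α j = α' j) (hlt : α i < α' i) :
    ν r + (r - 1) < pweight α + pweight β := by
  have hβ1 : ν i + α' i ≤ β 1 :=
    le_of_conjugate_add_eq (hν.add_s6 hα) (hν.add_s6 hα') hβ hi (by simpa using hlt)
      (hconj _ (by omega))
  have hνi : ν r + (r - i) ≤ ν i := hνs.add_sub_le hi hir hνr
  have hαi : i - 1 ≤ ∑ j ∈ Finset.Ico 1 i, α j := by
    have := Finset.card_nsmul_le_sum (Finset.Ico 1 i) α 1 fun j hj => by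
      rw [Finset.mem_Ico] at hj
      rw [hprev j hj.1 hj.2]
      have := hα'.antitone hj.1 hj.2.le
      omega
    simpa using this
  have := sum_le_pweight hα.2.2 (Finset.Ico 1 i)
  have := sum_le_pweight hβ.2.2 {1}
  simp only [Finset.sum_singleton] at this
  omega

lemma IsExtension.eqOn_Icc {ν α β α' β' γ : ℕ → ℕ} {r : ℕ} (h : IsExtension ν α β γ)
    (h' : IsExtension ν α' β' γ) (hν : IsPartition ν) (hνs : IsStrict ν) (hνr : ν r ≠ 0)
    (hα : IsPartition α) (hβ : IsPartition β) (hα' : IsPartition α') (hβ' : IsPartition β')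
    (hw : pweight α + pweight β ≤ ν r + (r - 1))
    (hw' : pweight α' + pweight β' ≤ ν r + (r - 1)) :
    Set.EqOn α α' (Set.Icc 1 r) := by
  have hconj := fun v hv => conjugate_add_eq_of_partCount_add_eq (hν.add_s6 hα) hβ (hν.add_s6 hα') hβ'
    (fun w hw => (h.2 w hw).symm.trans (h'.2 w hw)) (v := v) hv
  intro i ⟨hi, hir⟩
  induction i using Nat.strong_induction_on with
  | _ i ih =>
    have hprev : ∀ j, 1 ≤ j → j < i → α j = α' j := fun j hj hji => ih j hji hj (by omega)
    rcases lt_trichotomy (α i) (α' i) with hlt | heq | hgt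
    · exact absurd hw (lt_pweight_add_of_lt hν hνs hνr hα hβ hα' hconj hi hir hprev hlt).not_ge
    · exact heq
    · exact absurd hw' (lt_pweight_add_of_lt hν hνs hνr hα' hβ' hα
        (fun v hv => (hconj v hv).symm) hi hir (fun j hj hji => (hprev j hj hji).symm) hgt).not_ge

lemma partCount_eq_add {f : ℕ → ℕ} (hf : (support f).Finite) (r : ℕ) {v : ℕ} (hv : 1 ≤ v) :
    partCount f v = {i ∈ Set.Icc 1 r | f i = v}.ncard + {i ∈ Set.Ioi r | f i = v}.ncard := by
  have hsplit :
      {i | 1 ≤ i ∧ f i = v} = {i ∈ Set.Icc 1 r | f i = v} ∪ {i ∈ Set.Ioi r | f i = v} := by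
    ext i; simp only [Set.mem_ofPred_eq, Set.mem_union, Set.mem_Icc, Set.mem_Ioi]; omega
  have hdisj : Disjoint {i ∈ Set.Icc 1 r | f i = v} {i ∈ Set.Ioi r | f i = v} :=
    Set.disjoint_left.mpr fun i h₁ h₂ => by
      simp only [Set.mem_ofPred_eq, Set.mem_Icc, Set.mem_Ioi] at h₁ h₂; omega
  have hfin : {i | 1 ≤ i ∧ f i = v}.Finite :=
    hf.subset fun i hi => by simp only [Set.mem_ofPred_eq, mem_support] at hi ⊢; omega
  rw [partCount, hsplit, Set.ncard_union_eq hdisj (hfin.subset (hsplit ▸ Set.subset_union_left))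
    (hfin.subset (hsplit ▸ Set.subset_union_right))]

/-- Changing the first `r` rows of `f` and `f'` in the same way (giving `g` and `g'`) changes
their multiplicities by the same amount. -/
lemma partCount_add_partCount_swap {f f' g g' : ℕ → ℕ} {r v : ℕ} (hf : (support f).Finite)
    (hf' : (support f').Finite) (hg : (support g).Finite) (hg' : (support g').Finite)
    (hff' : Set.EqOn f f' (Set.Icc 1 r)) (hgg' : Set.EqOn g g' (Set.Icc 1 r))
    (hfg : Set.EqOn f g (Set.Ioi r)) (hf'g' : Set.EqOn f' g' (Set.Ioi r)) (hv : 1 ≤ v) :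
    partCount f v + partCount g' v = partCount f' v + partCount g v := by
  have hlow {a b : ℕ → ℕ} (hab : Set.EqOn a b (Set.Icc 1 r)) :
      {i ∈ Set.Icc 1 r | a i = v} = {i ∈ Set.Icc 1 r | b i = v} :=
    Set.ext fun i => and_congr_right fun hi => by rw [hab hi]
  have hhigh {a b : ℕ → ℕ} (hab : Set.EqOn a b (Set.Ioi r)) :
      {i ∈ Set.Ioi r | a i = v} = {i ∈ Set.Ioi r | b i = v} :=
    Set.ext fun i => and_congr_right fun hi => by rw [hab hi]
  rw [partCount_eq_add hf r hv, partCount_eq_add hf' r hv, partCount_eq_add hg r hv,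
    partCount_eq_add hg' r hv, hlow hff', hlow hgg', hhigh hfg, hhigh hf'g']
  omega

theorem extensions_of_mu_coincide_general (r : ℕ) (μ ν : ℕ → ℕ)
    (hμ : IsPartition μ) (hν : IsPartition ν)
    (hνs : IsStrict ν)
    (hrmax : ∀ j, r < j → μ j = ν j)
    (hlt : μ r < ν r)
    (α β α' β' γ : ℕ → ℕ)
    (hα : IsPartition α) (hβ : IsPartition β)
    (hα' : IsPartition α') (hβ' : IsPartition β')
    (hw : pweight α + pweight β = ν r + (r - 1))
    (hw' : pweight α' + pweight β' = ν r + (r - 1))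
    (h : IsExtension ν α β γ) (h' : IsExtension ν α' β' γ) :
    ∀ δ δ' : ℕ → ℕ, IsExtension μ α β δ → IsExtension μ α' β' δ' → δ = δ' := by
  intro δ δ' hδ hδ'
  have hαα' : Set.EqOn α α' (Set.Icc 1 r) :=
    h.eqOn_Icc h' hν hνs (by omega) hα hβ hα' hβ' hw.le hw'.le
  refine hδ.1.eq_of_partCount_eq hδ'.1 fun v hv => ?_
  have hswap := partCount_add_partCount_swap (r := r) (f := fun i => μ i + α i)
    (f' := fun i => μ i + α' i) (g := fun i => ν i + α i) (g' := fun i => ν i + α' i)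
    (hμ.add_s6 hα).2.2 (hμ.add_s6 hα').2.2 (hν.add_s6 hα).2.2 (hν.add_s6 hα').2.2
    (fun i hi => by simp only [hαα' hi]) (fun i hi => by simp only [hαα' hi])
    (fun i hi => by simp only [hrmax i hi]) (fun i hi => by simp only [hrmax i hi]) hv
  rw [hδ.2 v hv, hδ'.2 v hv]
  have := h.2 v hv
  have := h'.2 v hv
  omega

theorem extensions_of_mu_coincide (n r m : ℕ) (μ ν : ℕ → ℕ)
    (hμ : IsPartition μ) (hν : IsPartition ν)
    (hμs : IsStrict μ) (hνs : IsStrict ν)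
    (hμn : pweight μ = n) (hνn : pweight ν = n) (hne : μ ≠ ν)
    (hr : μ r ≠ ν r) (hrmax : ∀ j, r < j → μ j = ν j)
    (hlt : μ r < ν r) (hm : m = r + ν r)
    (k : ℕ) (α β α' β' γ : ℕ → ℕ)
    (hα : IsPartition α) (hβ : IsPartition β)
    (hα' : IsPartition α') (hβ' : IsPartition β')
    (hk : α 1 = k) (hk' : α' 1 = k)
    (hw : pweight α + pweight β = ν r + (r - 1))
    (hw' : pweight α' + pweight β' = ν r + (r - 1))
    (h : IsExtension ν α β γ) (h' : IsExtension ν α' β' γ) :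
    ∀ δ δ' : ℕ → ℕ, IsExtension μ α β δ → IsExtension μ α' β' δ' → δ = δ' :=
  extensions_of_mu_coincide_general r μ ν hμ hν hνs hrmax hlt α β α' β' γ hα hβ hα' hβ' hw hw' h h'
end

section
/- Let μ and ν be distinct strict partitions of n, let r be the largest index with μ_r ≠ ν_r (such r exists and r > 1 since |μ| = |ν|), assume μ_r < ν_r, and set m = r + ν_r. Then |P_{n+m−1}(μ,1)| < |P_{n+m−1}(ν,1)|. -/
namespace PW
open Finset

/-- Largest index of a nonzero part (0 if none). -/
noncomputable def Lp (α : ℕ → ℕ) : ℕ := sSup {i | α i ≠ 0}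

lemma anti (hα : IsPartition α) : ∀ i j, 1 ≤ i → i ≤ j → α j ≤ α i := by
  intro i j hi hij
  induction j, hij using Nat.le_induction with
  | base => exact le_rfl
  | succ k hk ih => exact le_trans (hα.2.1 k (le_trans hi hk)) ih

lemma nonzero_iff (hα : IsPartition α) : ∀ i, α i ≠ 0 ↔ (1 ≤ i ∧ i ≤ Lp α) := by
  intro i
  rcases Set.eq_empty_or_nonempty {i | α i ≠ 0} with he | hne
  · have h0 : α i = 0 := by
      by_contra h
      have : i ∈ {i | α i ≠ 0} := h
      rw [he] at this; exact this
    have : Lp α = 0 := by simp [Lp, he]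
    simp [h0, this]; omega
  · have hbdd : BddAbove {i | α i ≠ 0} := hα.2.2.bddAbove
    have hmem : Lp α ∈ {i | α i ≠ 0} := Nat.sSup_mem hne hbdd
    constructor
    · intro h
      refine ⟨?_, le_csSup hbdd h⟩
      by_contra hi; push_neg at hi
      interval_cases i
      · exact h hα.1
    · rintro ⟨h1, h2⟩
      intro h0
      have := anti hα i (Lp α) h1 h2
      have : α (Lp α) = 0 := by omega
      exact hmem this

lemma Lp_pos (hα : IsPartition α) {i : ℕ} (h1 : 1 ≤ i) (h2 : i ≤ Lp α) : α i ≠ 0 :=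
  (nonzero_iff hα i).2 ⟨h1, h2⟩

lemma zero_of_gt (hα : IsPartition α) {i : ℕ} (h : Lp α < i) : α i = 0 := by
  by_contra h0
  have := ((nonzero_iff hα i).1 h0).2; omega

open scoped Classical in
/-- The multiset of nonzero parts. -/
noncomputable def parts (α : ℕ → ℕ) : Multiset ℕ :=
  if h : {i | α i ≠ 0}.Finite then h.toFinset.val.map α else 0

lemma parts_eq (hα : IsPartition α) :
    parts α = (Finset.Icc 1 (Lp α)).val.map α := by
  have h := hα.2.2
  classical
  rw [parts]
  rw [dif_pos h]
  have he : h.toFinset = Finset.Icc 1 (Lp α) := by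
    ext i
    simp only [Set.Finite.mem_toFinset, Set.mem_setOf_eq, Finset.mem_Icc]
    exact nonzero_iff hα i
  rw [he]

lemma pweight_eq (hα : IsPartition α) :
    pweight α = ∑ i ∈ Finset.Icc 1 (Lp α), α i := by
  have h : (Function.support α).Finite := hα.2.2
  rw [pweight, finsum_eq_sum α h]
  apply Finset.sum_congr _ (fun _ _ => rfl)
  ext i
  simp [Set.Finite.mem_toFinset, Function.mem_support, Finset.mem_Icc, nonzero_iff hα i]

lemma parts_sum (hα : IsPartition α) : (parts α).sum = pweight α := by
  rw [parts_eq hα, pweight_eq hα]; rfl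

lemma mem_parts (hα : IsPartition α) {x : ℕ} :
    x ∈ parts α ↔ ∃ i, 1 ≤ i ∧ i ≤ Lp α ∧ α i = x := by
  rw [parts_eq hα]
  simp [Multiset.mem_map, Finset.mem_Icc]
  constructor
  · rintro ⟨i, ⟨h1, h2⟩, h3⟩; exact ⟨i, h1, h2, h3⟩
  · rintro ⟨i, h1, h2, h3⟩; exact ⟨i, ⟨h1, h2⟩, h3⟩

lemma zero_not_mem_parts (hα : IsPartition α) : 0 ∉ parts α := by
  rw [mem_parts hα]
  rintro ⟨i, h1, h2, h3⟩
  exact Lp_pos hα h1 h2 h3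

lemma parts_le_head (hα : IsPartition α) {x : ℕ} (hx : x ∈ parts α) : x ≤ α 1 := by
  rw [mem_parts hα] at hx
  obtain ⟨i, h1, h2, h3⟩ := hx
  exact h3 ▸ anti hα 1 i le_rfl h1

/-- diagonal decrease for strict partitions -/
lemma diag (hα : IsPartition α) (hs : IsStrict α) :
    ∀ i j, 1 ≤ i → i ≤ j → j ≤ Lp α → α j + j ≤ α i + i := by
  intro i j hi hij hj
  induction j, hij using Nat.le_induction with
  | base => exact le_rfl
  | succ k hk ih =>
      have hk1 : α (k+1) ≠ 0 := Lp_pos hα (by omega) hj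
      have := hs k (k+1) (le_trans hi hk) (by omega) hk1
      have := ih (by omega)
      omega

lemma strict_lt (hα : IsPartition α) (hs : IsStrict α) {i j : ℕ}
    (hi : 1 ≤ i) (hij : i < j) (hj : j ≤ Lp α) : α j < α i :=
  hs i j hi hij (Lp_pos hα (by omega) hj)

end PW
namespace PW
open Finset

/-- Reconstruct a partition function from a multiset of parts. -/
noncomputable def fromParts (M : Multiset ℕ) : ℕ → ℕ :=
  fun i => if i = 0 then 0 else (M.sort (· ≥ ·)).getD (i - 1) 0

lemma sorted_ge_getD {l : List ℕ} (hl : List.Pairwise (· ≥ ·) l) {i j : ℕ} (hij : i ≤ j) :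
    l.getD j 0 ≤ l.getD i 0 := by
  rcases lt_or_ge j l.length with hj | hj
  · have hi : i < l.length := lt_of_le_of_lt hij hj
    rw [List.getD_eq_getElem l 0 hj, List.getD_eq_getElem l 0 hi]
    rcases eq_or_lt_of_le hij with rfl | hlt
    · exact le_rfl
    · exact List.pairwise_iff_get.1 hl ⟨i, hi⟩ ⟨j, hj⟩ hlt
  · rw [List.getD_eq_default l 0 hj]; exact Nat.zero_le _

lemma fromParts_partition {M : Multiset ℕ} : IsPartition (fromParts M) := by
  refine ⟨rfl, ?_, ?_⟩
  · intro i hi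
    simp only [fromParts, if_neg (by omega : ¬ i + 1 = 0), if_neg (by omega : ¬ i = 0)]
    exact sorted_ge_getD (M.pairwise_sort (· ≥ ·)) (by omega)
  · apply Set.Finite.subset (Set.finite_Icc 0 (M.sort (· ≥ ·)).length)
    intro i hi
    simp only [Set.mem_setOf_eq, fromParts] at hi
    simp only [Set.mem_Icc]
    by_contra h
    push_neg at h
    have h2 := h (Nat.zero_le i)
    rw [if_neg (by omega), List.getD_eq_default _ 0 (by omega)] at hi
    exact hi rfl

lemma fromParts_parts (hα : IsPartition α) : fromParts (parts α) = α := by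
  have key : (parts α).sort (· ≥ ·) = (List.range (Lp α)).map (fun k => α (k + 1)) := by
    refine List.Perm.eq_of_pairwise' (r := (· ≥ ·)) ?_ ?_ ?_
    rotate_right
    · rw [← Multiset.coe_eq_coe, Multiset.sort_eq, parts_eq hα]
      have : Finset.Icc 1 (Lp α) = Finset.map ⟨fun k => k + 1, add_left_injective 1⟩
          (Finset.range (Lp α)) := by
        ext x
        simp only [Finset.mem_Icc, Finset.mem_map, Finset.mem_range,
          Function.Embedding.coeFn_mk]
        constructor
        · rintro ⟨h1, h2⟩; exact ⟨x - 1, by omega, by omega⟩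
        · rintro ⟨a, ha, rfl⟩; omega
      rw [this, Finset.map_val, Finset.range_val]
      simp [Multiset.map_map]
      rfl
    · exact Multiset.pairwise_sort _ _
    · rw [List.pairwise_iff_get]
      intro i j hij
      simp only [List.get_eq_getElem, List.getElem_map, List.getElem_range]
      exact anti hα _ _ (by omega) (by
        have := hij
        omega)
  funext i
  rcases Nat.eq_zero_or_pos i with rfl | hi
  · simp [fromParts, hα.1]
  · simp only [fromParts, if_neg (by omega : ¬ i = 0), key]
    rcases lt_or_ge (i - 1) (Lp α) with h | h
    · rw [List.getD_eq_getElem _ 0 (by simpa using h)]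
      simp only [List.getElem_map, List.getElem_range]
      congr 1; omega
    · rw [List.getD_eq_default _ 0 (by simpa using h)]
      exact (zero_of_gt hα (by omega)).symm

end PW
namespace PW
open Finset

lemma fromParts_nonzero_iff {M : Multiset ℕ} (hM : 0 ∉ M) :
    ∀ i, fromParts M i ≠ 0 ↔ (1 ≤ i ∧ i ≤ (M.sort (· ≥ ·)).length) := by
  intro i
  constructor
  · intro h
    rcases Nat.eq_zero_or_pos i with rfl | hi
    · simp [fromParts] at h
    refine ⟨hi, ?_⟩
    by_contra hlen
    rw [fromParts, if_neg (by omega), List.getD_eq_default _ 0 (by omega)] at h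
    exact h rfl
  · rintro ⟨h1, h2⟩
    rw [fromParts, if_neg (by omega), List.getD_eq_getElem _ 0 (by omega)]
    intro h0
    apply hM
    rw [← Multiset.sort_eq M (· ≥ ·), ← h0]
    exact Multiset.mem_coe.2 (List.getElem_mem _)

lemma Lp_fromParts {M : Multiset ℕ} (hM : 0 ∉ M) :
    Lp (fromParts M) = (M.sort (· ≥ ·)).length := by
  set L := (M.sort (· ≥ ·)).length
  rcases Nat.eq_zero_or_pos L with hL | hL
  · have : {i | fromParts M i ≠ 0} = ∅ := by
      ext i; simp only [Set.mem_setOf_eq, Set.mem_empty_iff_false, iff_false, not_not]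
      by_contra h
      have := (fromParts_nonzero_iff hM i).1 h
      omega
    simp [Lp, this, hL]
  · have hset : {i | fromParts M i ≠ 0} = Set.Icc 1 L := by
      ext i
      simp only [Set.mem_setOf_eq, Set.mem_Icc]
      exact fromParts_nonzero_iff hM i
    rw [Lp, hset]
    apply le_antisymm
    · exact csSup_le ⟨1, Set.mem_Icc.2 (by omega)⟩ (fun x hx => hx.2)
    · exact le_csSup (Set.finite_Icc 1 L).bddAbove (Set.mem_Icc.2 (by omega))

lemma parts_fromParts {M : Multiset ℕ} (hM : 0 ∉ M) : parts (fromParts M) = M := by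
  have hP : IsPartition (fromParts M) := fromParts_partition
  set l := M.sort (· ≥ ·) with hl
  rw [parts_eq hP, Lp_fromParts hM]
  have : Finset.Icc 1 l.length = Finset.map ⟨fun k => k + 1, add_left_injective 1⟩
      (Finset.range l.length) := by
    ext x
    simp only [Finset.mem_Icc, Finset.mem_map, Finset.mem_range, Function.Embedding.coeFn_mk]
    constructor
    · rintro ⟨h1, h2⟩; exact ⟨x - 1, by omega, by omega⟩
    · rintro ⟨a, ha, rfl⟩; omega
  rw [this, Finset.map_val, Finset.range_val]
  have hrange : (Multiset.range l.length) = (↑(List.range l.length) : Multiset ℕ) := rfl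
  rw [hrange, Multiset.map_coe, Multiset.map_coe]
  have hlist : List.map (fromParts M) (List.map (fun k => k + 1) (List.range l.length)) = l := by
    apply List.ext_getElem
    · simp
    · intro n h1 h2
      simp only [List.getElem_map, List.getElem_range, fromParts,
        if_neg (by omega : ¬ n + 1 = 0)]
      rw [← hl, List.getD_eq_getElem _ 0 (by simpa using h2)]
      congr 1
  simp only [Function.Embedding.coeFn_mk]
  rw [hlist, hl, Multiset.sort_eq]

lemma pweight_fromParts {M : Multiset ℕ} (hM : 0 ∉ M) : pweight (fromParts M) = M.sum := by
  rw [← parts_sum fromParts_partition, parts_fromParts hM]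

lemma fromParts_head {M : Multiset ℕ} (hM : 0 ∉ M) {x : ℕ} (hx : x ∈ M)
    (hmax : ∀ y ∈ M, y ≤ x) : fromParts M 1 = x := by
  have hP : IsPartition (fromParts M) := fromParts_partition
  have h1 : x ∈ parts (fromParts M) := by rw [parts_fromParts hM]; exact hx
  have h2 := parts_le_head hP h1
  have h3 : fromParts M 1 ∈ M ∨ fromParts M 1 = 0 := by
    rcases Nat.eq_zero_or_pos (fromParts M 1) with h | h
    · exact Or.inr h
    · left
      have : fromParts M 1 ∈ parts (fromParts M) := by
        rw [mem_parts hP]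
        exact ⟨1, le_rfl, ((nonzero_iff hP 1).1 (by omega)).2, rfl⟩
      rwa [parts_fromParts hM] at this
  rcases h3 with h | h
  · exact le_antisymm (hmax _ h) h2
  · have hx0 : x ≠ 0 := fun h0 => hM (h0 ▸ hx)
    omega

end PW
namespace PW
open Finset

/-- The multiset of parts of `λ` with 1 added to the first `a` parts. -/
noncomputable def Cmul (l : ℕ → ℕ) (a : ℕ) : Multiset ℕ :=
  (Finset.Icc 1 (Lp l)).val.map (fun i => l i + if i ≤ a then 1 else 0)

lemma mem_Cmul {l : ℕ → ℕ} {a v : ℕ} :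
    v ∈ Cmul l a ↔ ∃ i, 1 ≤ i ∧ i ≤ Lp l ∧ l i + (if i ≤ a then 1 else 0) = v := by
  simp only [Cmul, Multiset.mem_map, Finset.mem_val, Finset.mem_Icc]
  constructor
  · rintro ⟨i, ⟨h1, h2⟩, h3⟩; exact ⟨i, h1, h2, h3⟩
  · rintro ⟨i, h1, h2, h3⟩; exact ⟨i, ⟨h1, h2⟩, h3⟩

lemma zero_not_mem_Cmul {l : ℕ → ℕ} (hl : IsPartition l) {a : ℕ} : 0 ∉ Cmul l a := by
  rw [mem_Cmul]
  rintro ⟨i, h1, h2, h3⟩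
  have := Lp_pos hl h1 h2
  omega

lemma Cmul_sum {l : ℕ → ℕ} (hl : IsPartition l) {a : ℕ} (ha : a ≤ Lp l) :
    (Cmul l a).sum = pweight l + a := by
  have : (Cmul l a).sum = ∑ i ∈ Finset.Icc 1 (Lp l), (l i + if i ≤ a then 1 else 0) := rfl
  rw [this, Finset.sum_add_distrib, ← pweight_eq hl]
  congr 1
  rw [← Finset.card_filter]
  have : Finset.filter (fun i => i ≤ a) (Finset.Icc 1 (Lp l)) = Finset.Icc 1 a := by
    ext x
    simp only [Finset.mem_filter, Finset.mem_Icc]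
    omega
  rw [this, Nat.card_Icc]
  omega

lemma count_Cmul {l : ℕ → ℕ} (a v : ℕ) :
    Multiset.count v (Cmul l a) =
      ∑ i ∈ Finset.Ioc 0 (Lp l), if l i + (if i ≤ a then 1 else 0) = v then 1 else 0 := by
  rw [Cmul, Multiset.count_map]
  have : Multiset.filter (fun i => v = l i + if i ≤ a then 1 else 0) (Finset.Icc 1 (Lp l)).val
      = (Finset.filter (fun i => v = l i + if i ≤ a then 1 else 0) (Finset.Icc 1 (Lp l))).val :=
    (Finset.filter_val _ _).symm
  rw [this]
  have : Multiset.card (Finset.filter (fun i => v = l i + if i ≤ a then 1 else 0)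
      (Finset.Icc 1 (Lp l))).val = (Finset.filter (fun i => v = l i + if i ≤ a then 1 else 0)
      (Finset.Icc 1 (Lp l))).card := rfl
  rw [this, Finset.card_filter]
  rw [show Finset.Icc 1 (Lp l) = Finset.Ioc 0 (Lp l) from Finset.Icc_add_one_left_eq_Ioc 0 (Lp l)]
  apply Finset.sum_congr rfl
  intro i _
  by_cases h : l i + (if i ≤ a then 1 else 0) = v
  · rw [if_pos h, if_pos h.symm]
  · rw [if_neg h, if_neg (fun hh => h hh.symm)]

lemma count_swap {l : ℕ → ℕ} {a b v : ℕ} (hab : a ≤ b) (hb : b ≤ Lp l) :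
    Multiset.count v (Cmul l b) + (∑ i ∈ Finset.Ioc a b, if l i = v then 1 else 0) =
      Multiset.count v (Cmul l a) + ∑ i ∈ Finset.Ioc a b, if l i + 1 = v then 1 else 0 := by
  rw [count_Cmul, count_Cmul]
  rw [← Finset.sum_Ioc_consecutive _ (Nat.zero_le a) (le_trans hab hb),
      ← Finset.sum_Ioc_consecutive _ hab hb]
  rw [← Finset.sum_Ioc_consecutive (fun i => if l i + (if i ≤ a then 1 else 0) = v then 1 else 0)
        (Nat.zero_le a) (le_trans hab hb),
      ← Finset.sum_Ioc_consecutive (fun i => if l i + (if i ≤ a then 1 else 0) = v then 1 else 0)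
        hab hb]
  have e1 : ∀ x ∈ Finset.Ioc 0 a, (if l x + (if x ≤ b then 1 else 0) = v then 1 else 0)
      = (if l x + (if x ≤ a then 1 else 0) = v then 1 else 0) := by
    intro x hx
    simp only [Finset.mem_Ioc] at hx
    rw [if_pos (by omega : x ≤ b), if_pos (by omega : x ≤ a)]
  have e2 : ∀ x ∈ Finset.Ioc a b, (if l x + (if x ≤ b then 1 else 0) = v then 1 else 0)
      = (if l x + 1 = v then 1 else 0) := by
    intro x hx
    simp only [Finset.mem_Ioc] at hx
    rw [if_pos (by omega : x ≤ b)]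
  have e3 : ∀ x ∈ Finset.Ioc a b, (if l x + (if x ≤ a then 1 else 0) = v then 1 else 0)
      = (if l x = v then 1 else 0) := by
    intro x hx
    simp only [Finset.mem_Ioc] at hx
    rw [if_neg (by omega : ¬ x ≤ a)]
    simp
  have e4 : ∀ x ∈ Finset.Ioc b (Lp l), (if l x + (if x ≤ b then 1 else 0) = v then 1 else 0)
      = (if l x + (if x ≤ a then 1 else 0) = v then 1 else 0) := by
    intro x hx
    simp only [Finset.mem_Ioc] at hx
    rw [if_neg (by omega : ¬ x ≤ b), if_neg (by omega : ¬ x ≤ a)]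
  rw [Finset.sum_congr rfl e1, Finset.sum_congr rfl e2, Finset.sum_congr rfl e4,
      Finset.sum_congr rfl e3]
  ring

end PW
namespace PW
open Finset

lemma map_rows_le {α : ℕ → ℕ} (hα : IsPartition α) {f : ℕ → ℕ} {L : ℕ}
    (hf1 : ∀ i, 1 ≤ i → 1 ≤ f i)
    (hfmono : ∀ i j, 1 ≤ i → i < j → f i < f j)
    (hval : ∀ i, 1 ≤ i → i ≤ L → α (f i) ≠ 0) :
    Multiset.map (fun i => α (f i)) (Finset.Icc 1 L).val ≤ parts α := by
  classical
  have hinj : Set.InjOn f (Finset.Icc 1 L : Set ℕ) := by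
    intro x hx y hy hxy
    simp only [Finset.coe_Icc, Set.mem_Icc] at hx hy
    by_contra hne
    rcases lt_or_gt_of_ne hne with h | h
    · exact absurd hxy (Nat.ne_of_lt (hfmono x y hx.1 h))
    · exact absurd hxy.symm (Nat.ne_of_lt (hfmono y x hy.1 h))
  have himg : Finset.image f (Finset.Icc 1 L) ⊆ Finset.Icc 1 (Lp α) := by
    intro x hx
    simp only [Finset.mem_image, Finset.mem_Icc] at hx ⊢
    obtain ⟨i, ⟨hi1, hi2⟩, rfl⟩ := hx
    exact (nonzero_iff hα (f i)).1 (hval i hi1 hi2)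
  have h1 : Multiset.map (fun i => α (f i)) (Finset.Icc 1 L).val
      = Multiset.map α (Finset.image f (Finset.Icc 1 L)).val := by
    rw [Finset.image_val_of_injOn hinj, Multiset.map_map]
    rfl
  rw [h1, parts_eq hα]
  exact Multiset.map_le_map (Finset.val_le_iff.2 himg)

lemma contains_of_le {l α : ℕ → ℕ} (hl : IsPartition l) (hs : IsStrict l)
    (hα : IsPartition α) {a : ℕ} (ha1 : 1 ≤ a) (haL : a ≤ Lp l)
    (hle : Cmul l a ≤ parts α) : Contains α l := by
  classical
  set L := Lp l with hLdef
  set c : ℕ → ℕ := fun i => l i + if i ≤ a then 1 else 0 with hc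
  have hcmem : ∀ i, 1 ≤ i → i ≤ L → ∃ jj, 1 ≤ jj ∧ jj ≤ Lp α ∧ α jj = c i := by
    intro i h1 h2
    have : c i ∈ parts α := Multiset.mem_of_le hle (mem_Cmul.2 ⟨i, h1, h2, rfl⟩)
    rw [mem_parts hα] at this
    obtain ⟨jj, hj1, hj2, hj3⟩ := this
    exact ⟨jj, hj1, hj2, hj3⟩
  -- c is strictly decreasing on [1, L]
  have hcdec : ∀ i j, 1 ≤ i → i < j → j ≤ L → c j < c i := by
    intro i j h1 hij hj
    have hji : l j < l i ∨ (l j ≤ l i ∧ (j ≤ a → i ≤ a)) := by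
      by_cases hja : j ≤ a
      · exact Or.inr ⟨anti hl i j h1 (le_of_lt hij), fun _ => by omega⟩
      · exact Or.inl (strict_lt hl hs h1 hij hj)
    simp only [hc]
    rcases hji with h | ⟨h, h2⟩
    · by_cases hja : j ≤ a
      · rw [if_pos hja, if_pos (by omega)]; omega
      · by_cases hia : i ≤ a
        · rw [if_neg hja, if_pos hia]; omega
        · rw [if_neg hja, if_neg hia]; omega
    · have hlj := strict_lt hl hs h1 hij hj
      by_cases hja : j ≤ a
      · rw [if_pos hja, if_pos (h2 hja)]; omega
      · by_cases hia : i ≤ a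
        · rw [if_neg hja, if_pos hia]; omega
        · rw [if_neg hja, if_neg hia]; omega
  set f0 : ℕ → ℕ := fun i => if h : 1 ≤ i ∧ i ≤ L then (hcmem i h.1 h.2).choose else 0 with hf0
  have hf0spec : ∀ i, 1 ≤ i → i ≤ L →
      1 ≤ f0 i ∧ f0 i ≤ Lp α ∧ α (f0 i) = c i := by
    intro i h1 h2
    have := (hcmem i h1 h2).choose_spec
    simp only [hf0, dif_pos (⟨h1, h2⟩ : 1 ≤ i ∧ i ≤ L)]
    exact this
  have hf0mono : ∀ i j, 1 ≤ i → i < j → j ≤ L → f0 i < f0 j := by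
    intro i j h1 hij hj
    obtain ⟨hi1, hi2, hi3⟩ := hf0spec i h1 (by omega)
    obtain ⟨hj1, hj2, hj3⟩ := hf0spec j (by omega) hj
    have hcc : c j < c i := hcdec i j h1 hij hj
    by_contra hcon
    push_neg at hcon
    have := anti hα (f0 j) (f0 i) hj1 hcon
    omega
  set B := Lp α + (Finset.Icc 1 L).sup f0 with hB
  set f : ℕ → ℕ := fun i => if i ≤ L then f0 i else B + i with hf
  set g : ℕ → ℕ := fun j => if l a + 1 ≤ j then j + 1 else j with hg
  have hgmono : ∀ i j, i < j → g i < g j := by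
    intro i j hij
    simp only [hg]
    split_ifs <;> omega
  have hgge : ∀ j, j ≤ g j ∧ g j ≤ j + 1 := by
    intro j; simp only [hg]; split <;> omega
  refine ⟨f, g, ?_, ?_, ?_, ?_, ?_⟩
  · intro i hi
    simp only [hf]
    split
    · exact (hf0spec i hi (by omega)).1
    · omega
  · intro j hj
    have := hgge j; omega
  · intro i j hi hij
    simp only [hf]
    by_cases h2 : j ≤ L
    · rw [if_pos (by omega), if_pos h2]
      exact hf0mono i j hi hij h2
    · rw [if_neg h2]
      by_cases h1 : i ≤ L
      · rw [if_pos h1]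
        have : f0 i ≤ (Finset.Icc 1 L).sup f0 :=
          Finset.le_sup (Finset.mem_Icc.2 ⟨hi, h1⟩)
        omega
      · rw [if_neg h1]; omega
  · intro i j _ hij; exact hgmono i j hij
  · intro i j hi hj
    by_cases hiL : i ≤ L
    · obtain ⟨hr1, hr2, hr3⟩ := hf0spec i hi hiL
      have hfi : f i = f0 i := by simp only [hf, if_pos hiL]
      have hli : 1 ≤ l i := Nat.one_le_iff_ne_zero.2 (Lp_pos hl hi hiL)
      constructor
      · rintro ⟨-, hj1, hj2⟩
        refine ⟨by rw [hfi]; exact hr1, by have := (hgge j).1; omega, ?_⟩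
        rw [hfi, hr3]
        simp only [hc]
        by_cases hia : i ≤ a
        · have := (hgge j).2
          rw [if_pos hia]; omega
        · -- i > a : l i < l a, so g j = j
          have hlia : l i < l a := strict_lt hl hs ha1 (by omega) hiL
          have : g j = j := by simp only [hg]; rw [if_neg (by omega)]
          rw [if_neg hia]; omega
      · rintro ⟨-, hj1, hj2⟩
        refine ⟨hi, hj, ?_⟩
        rw [hfi, hr3] at hj2
        simp only [hc] at hj2
        by_contra hcon
        push_neg at hcon
        by_cases hia : i ≤ a
        · have hlal : l a ≤ l i := anti hl i a hi hia
          have : g j = j + 1 := by simp only [hg]; rw [if_pos (by omega)]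
          rw [if_pos hia] at hj2; omega
        · have : j ≤ g j := (hgge j).1
          rw [if_neg hia] at hj2; omega
    · -- i > L : both sides false
      have hl0 : l i = 0 := zero_of_gt hl (by omega)
      have hfi : f i = B + i := by simp only [hf, if_neg hiL]
      have hα0 : α (f i) = 0 := by
        rw [hfi]; exact zero_of_gt hα (by omega)
      constructor
      · rintro ⟨-, hj1, hj2⟩; omega
      · rintro ⟨-, hj1, hj2⟩
        rw [hα0] at hj2
        have := (hgge j).1
        omega

end PW
namespace PW
open Finset

lemma le_of_contains {l α : ℕ → ℕ} (hl : IsPartition l) (hs : IsStrict l)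
    (hα : IsPartition α) (hL : 1 ≤ Lp l) (hone : α 1 = 1 + l 1)
    (hC : Contains α l) :
    ∃ a, 1 ≤ a ∧ a ≤ Lp l ∧ Cmul l a ≤ parts α := by
  classical
  obtain ⟨f, g, hf1, hg1, hfmono, hgmono, hcell⟩ := hC
  set L := Lp l with hLdef
  -- g grows at least linearly
  have hgge : ∀ y x, 1 ≤ y → y ≤ x → g y + (x - y) ≤ g x := by
    intro y x hy hyx
    induction x, hyx using Nat.le_induction with
    | base => omega
    | succ k hk ih =>
        have := hgmono k (k + 1) (by omega) (by omega)
        omega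
  have hgid : ∀ x, 1 ≤ x → x ≤ g x := by
    intro x hx
    have h1 := hg1 1 le_rfl
    have := hgge 1 x le_rfl hx
    omega
  -- basic facts about selected rows
  have hrow : ∀ i, 1 ≤ i → i ≤ L →
      g (l i) ≤ α (f i) ∧ α (f i) < g (l i + 1) ∧ l i ≤ α (f i) := by
    intro i h1 h2
    have hli : 1 ≤ l i := Nat.one_le_iff_ne_zero.2 (Lp_pos hl h1 h2)
    have hA := (hcell i (l i) h1 hli).1 ⟨h1, hli, le_rfl⟩
    have hB : ¬ Cell α (f i) (g (l i + 1)) := by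
      intro hcon
      have := (hcell i (l i + 1) h1 (by omega)).2 hcon
      simp only [Cell] at this
      omega
    simp only [Cell] at hA hB
    push_neg at hB
    refine ⟨hA.2.2, ?_, le_trans (hgid (l i) hli) hA.2.2⟩
    exact hB (hf1 i h1) (hg1 _ (by omega))
  set d : ℕ → ℕ := fun i => α (f i) - l i with hd
  have hd1 : d 1 ≤ 1 := by
    have hf11 := hf1 1 le_rfl
    have := anti hα 1 (f 1) le_rfl hf11
    simp only [hd]
    omega
  have hdstep : ∀ i, 1 ≤ i → i + 1 ≤ L → d (i + 1) ≤ d i := by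
    intro i h1 h2
    obtain ⟨ha1, ha2, ha3⟩ := hrow i h1 (by omega)
    obtain ⟨hb1, hb2, hb3⟩ := hrow (i + 1) (by omega) h2
    have hlt : l (i + 1) < l i := strict_lt hl hs h1 (by omega) h2
    have := hgge (l (i + 1) + 1) (l i) (by omega) (by omega)
    simp only [hd]
    omega
  have hdmono : ∀ i j, 1 ≤ i → i ≤ j → j ≤ L → d j ≤ d i := by
    intro i j h1 hij hj
    induction j, hij using Nat.le_induction with
    | base => exact le_rfl
    | succ k hk ih =>
        exact le_trans (hdstep k (by omega) hj) (ih (by omega))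
  have hdle1 : ∀ i, 1 ≤ i → i ≤ L → d i ≤ 1 :=
    fun i h1 h2 => le_trans (hdmono 1 i le_rfl h1 h2) hd1
  -- the multiset of selected values, for a parameter A, equals Cmul l A
  have key : ∀ A : ℕ, (∀ i, 1 ≤ i → i ≤ L → d i = if i ≤ A then 1 else 0) →
      Cmul l A ≤ parts α := by
    intro A hdA
    have heq : Cmul l A = Multiset.map (fun i => α (f i)) (Finset.Icc 1 L).val := by
      rw [Cmul]
      apply Multiset.map_congr rfl
      intro i hi
      rw [Finset.mem_val, Finset.mem_Icc] at hi
      have h3 := (hrow i hi.1 hi.2).2.2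
      have := hdA i hi.1 hi.2
      simp only [hd] at this
      omega
    rw [heq]
    exact map_rows_le hα hf1 hfmono
      (fun i h1 h2 => by have := (hrow i h1 h2).2.2
                         have := Lp_pos hl h1 h2
                         omega)
  by_cases hT : ∃ i, 1 ≤ i ∧ i ≤ L ∧ d i = 1
  · set T := {i | 1 ≤ i ∧ i ≤ L ∧ d i = 1} with hTdef
    have hTne : T.Nonempty := hT
    have hTbdd : BddAbove T := ⟨L, fun x hx => hx.2.1⟩
    have hA := Nat.sSup_mem hTne hTbdd
    set A := sSup T with hAdef
    refine ⟨A, hA.1, hA.2.1, key A ?_⟩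
    intro i h1 h2
    by_cases hiA : i ≤ A
    · rw [if_pos hiA]
      have hge := hdmono i A h1 hiA hA.2.1
      rw [hA.2.2] at hge
      have := hdle1 i h1 h2
      omega
    · rw [if_neg hiA]
      have : d i ≠ 1 := by
        intro h
        exact hiA (le_csSup hTbdd ⟨h1, h2, h⟩)
      have := hdle1 i h1 h2
      omega
  · -- all d i = 0 ; we get Cmul l 0 ≤ parts α and upgrade to a = 1
    push_neg at hT
    have h0 : Cmul l 0 ≤ parts α := key 0 (by
      intro i h1 h2
      rw [if_neg (by omega)]
      have := hdle1 i h1 h2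
      have := hT i h1 h2
      omega)
    refine ⟨1, le_rfl, hL, ?_⟩
    rw [Multiset.le_iff_count]
    intro v
    have hswap := count_swap (l := l) (a := 0) (b := 1) (v := v) (by omega) hL
    have hIoc : Finset.Ioc 0 1 = {1} := by decide
    rw [hIoc, Finset.sum_singleton, Finset.sum_singleton] at hswap
    have hcount0 := Multiset.le_iff_count.1 h0 v
    by_cases hv : v = l 1 + 1
    · -- v = l 1 + 1 : count in Cmul l 0 is zero, count in parts α ≥ 1
      have hz : Multiset.count v (Cmul l 0) = 0 := by
        rw [Multiset.count_eq_zero]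
        rw [mem_Cmul]
        rintro ⟨i, hi1, hi2, hi3⟩
        rw [if_neg (by omega)] at hi3
        have := anti hl 1 i le_rfl hi1
        omega
      have hmem : v ∈ parts α := by
        rw [mem_parts hα]
        have hα1 : α 1 ≠ 0 := by omega
        exact ⟨1, le_rfl, ((nonzero_iff hα 1).1 hα1).2, by omega⟩
      have := Multiset.one_le_count_iff_mem.2 hmem
      rw [if_neg (by omega : ¬ l 1 = v), if_pos (by omega : l 1 + 1 = v), hz] at hswap
      omega
    · rw [if_neg (by omega : ¬ l 1 + 1 = v)] at hswap
      omega

end PW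
namespace PW
open Finset

lemma mem_PnSetK_iff {l : ℕ → ℕ} (hl : IsPartition l) (hs : IsStrict l) (hL : 1 ≤ Lp l)
    {N : ℕ} {α : ℕ → ℕ} :
    α ∈ PnSetK N l 1 ↔ (IsPartition α ∧ pweight α = N ∧ α 1 = 1 + l 1 ∧
      ∃ a, 1 ≤ a ∧ a ≤ Lp l ∧ Cmul l a ≤ parts α) := by
  simp only [PnSetK, PnSet, Set.mem_setOf_eq]
  constructor
  · rintro ⟨⟨hP, hw, hC⟩, h1⟩
    exact ⟨hP, hw, h1, le_of_contains hl hs hP hL h1 hC⟩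
  · rintro ⟨hP, hw, h1, a, ha1, ha2, hle⟩
    exact ⟨⟨hP, hw, contains_of_le hl hs hP ha1 ha2 hle⟩, h1⟩

lemma elem_le_sum {β : Multiset ℕ} {y : ℕ} (hy : y ∈ β) : y ≤ β.sum :=
  Multiset.single_le_sum (fun _ _ => Nat.zero_le _) y hy

lemma finite_weight (N : ℕ) : {α : ℕ → ℕ | IsPartition α ∧ pweight α = N}.Finite := by
  classical
  have hbound : ∀ α, IsPartition α → pweight α = N → ∀ i, α i ≤ N ∧ (N < i → α i = 0) := by
    intro α hP hw i
    have hLN : Lp α ≤ N := by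
      rcases Nat.eq_zero_or_pos (Lp α) with h | h
      · omega
      · have h1 : (Finset.Icc 1 (Lp α)).card • 1 ≤ ∑ i ∈ Finset.Icc 1 (Lp α), α i := by
          apply Finset.card_nsmul_le_sum
          intro x hx
          rw [Finset.mem_Icc] at hx
          exact Nat.one_le_iff_ne_zero.2 (Lp_pos hP hx.1 hx.2)
        rw [← pweight_eq hP, hw, Nat.card_Icc] at h1
        simp at h1
        omega
    constructor
    · by_cases h0 : α i = 0
      · omega
      · have hi := (nonzero_iff hP i).1 h0
        have : α i ≤ ∑ j ∈ Finset.Icc 1 (Lp α), α j :=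
          Finset.single_le_sum (fun j _ => Nat.zero_le (α j)) (Finset.mem_Icc.2 hi)
        rw [← pweight_eq hP, hw] at this
        exact this
    · intro hNi
      by_contra h0
      have hi := (nonzero_iff hP i).1 h0
      omega
  set F : (ℕ → ℕ) → (Fin (N + 1) → Fin (N + 1)) :=
    fun α => fun k => ⟨min (α k.val) N, by omega⟩ with hF
  apply Set.Finite.of_finite_image (f := F)
  · exact Set.toFinite _
  · intro α hα β hβ heq
    simp only [Set.mem_setOf_eq] at hα hβ
    funext i
    rcases le_or_gt i N with h | h
    · have := congrFun heq ⟨i, by omega⟩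
      simp only [hF, Fin.mk.injEq] at this
      have h1 := (hbound α hα.1 hα.2 i).1
      have h2 := (hbound β hβ.1 hβ.2 i).1
      omega
    · rw [(hbound α hα.1 hα.2 i).2 h, (hbound β hβ.1 hβ.2 i).2 h]

lemma nojump {l : ℕ → ℕ} (hl : IsPartition l) (hs : IsStrict l) {a b : ℕ}
    (ha : 1 ≤ a) (hab : a < b) (hb : b ≤ Lp l) {β : Multiset ℕ}
    (h : Cmul l b ≤ Cmul l a + β) : l (a + 1) + 1 ∈ β := by
  classical
  set v := l (a + 1) + 1 with hv
  have h1 : v ∈ Cmul l b := mem_Cmul.2 ⟨a + 1, by omega, by omega, by rw [if_pos (by omega)]⟩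
  have h2 : Multiset.count v (Cmul l a) = 0 := by
    rw [Multiset.count_eq_zero]
    rw [mem_Cmul]
    rintro ⟨i, hi1, hi2, hi3⟩
    by_cases hia : i ≤ a
    · rw [if_pos hia] at hi3
      have : l (a + 1) < l i := strict_lt hl hs hi1 (by omega) (by omega)
      omega
    · rw [if_neg hia] at hi3
      have : l i ≤ l (a + 1) := anti hl (a + 1) i (by omega) (by omega)
      omega
  have h3 := Multiset.le_iff_count.1 h v
  rw [Multiset.count_add, h2] at h3
  have h4 := Multiset.one_le_count_iff_mem.2 h1
  exact Multiset.one_le_count_iff_mem.1 (by omega)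

end PW
open PW in
theorem card_PSetK_one_lt (n r m : ℕ) (μ ν : ℕ → ℕ)
    (hμ : IsPartition μ) (hν : IsPartition ν)
    (hμs : IsStrict μ) (hνs : IsStrict ν)
    (hμn : pweight μ = n) (hνn : pweight ν = n) (hne : μ ≠ ν)
    (hr : μ r ≠ ν r) (hrmax : ∀ j, r < j → μ j = ν j)
    (hlt : μ r < ν r) (hm : m = r + ν r) :
    (PnSetK (n + m - 1) μ 1).ncard < (PnSetK (n + m - 1) ν 1).ncard := by
  classical
  have hνr0 : ν r ≠ 0 := by omega
  have hr1 : 1 ≤ r := by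
    by_contra h
    push_neg at h
    interval_cases r
    rw [hμ.1, hν.1] at hr
    exact hr rfl
  have hLνr : r ≤ Lp ν := ((nonzero_iff hν r).1 hνr0).2
  have hLν1 : 1 ≤ Lp ν := le_trans hr1 hLνr
  have hn1 : 1 ≤ n := by
    have : ν r ≤ ∑ i ∈ Finset.Icc 1 (Lp ν), ν i :=
      Finset.single_le_sum (fun j _ => Nat.zero_le _) (Finset.mem_Icc.2 ⟨hr1, hLνr⟩)
    rw [← pweight_eq hν, hνn] at this
    omega
  have hLμ1 : 1 ≤ Lp μ := by
    by_contra h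
    push_neg at h
    have h0 : Lp μ = 0 := by omega
    have : pweight μ = 0 := by
      rw [pweight_eq hμ, h0]
      simp
    omega
  have hpw_ext : ∀ (l : ℕ → ℕ), IsPartition l → ∀ B, Lp l ≤ B →
      pweight l = ∑ i ∈ Finset.Icc 1 B, l i := by
    intro l hl B hB
    rw [pweight_eq hl]
    apply Finset.sum_subset (Finset.Icc_subset_Icc le_rfl hB)
    intro x hx hnx
    rw [Finset.mem_Icc] at hx hnx
    by_contra h0
    have := (nonzero_iff hl x).1 h0
    omega
  have hr2 : 2 ≤ r := by
    rcases eq_or_lt_of_le hr1 with h | h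
    · exfalso
      have h1 := hpw_ext μ hμ (max (Lp μ) (Lp ν)) (le_max_left _ _)
      have h2 := hpw_ext ν hν (max (Lp μ) (Lp ν)) (le_max_right _ _)
      have hlt2 : ∑ i ∈ Finset.Icc 1 (max (Lp μ) (Lp ν)), μ i <
          ∑ i ∈ Finset.Icc 1 (max (Lp μ) (Lp ν)), ν i := by
        apply Finset.sum_lt_sum
        · intro i hi
          rw [Finset.mem_Icc] at hi
          rcases eq_or_lt_of_le hi.1 with h1' | h1'
          · have : i = r := by omega
            rw [this]; exact le_of_lt hlt
          · rw [hrmax i (by omega)]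
        · refine ⟨r, Finset.mem_Icc.2 ⟨hr1, ?_⟩, hlt⟩
          exact le_trans hLνr (le_max_right _ _)
      omega
    · omega
  have hLle : Lp μ ≤ Lp ν := by
    by_contra hcon
    push_neg at hcon
    have hμL : μ (Lp μ) ≠ 0 := Lp_pos hμ (by omega) le_rfl
    rcases le_or_gt (Lp μ) r with h | h
    · omega
    · have h2 : ν (Lp μ) ≠ 0 := by rw [← hrmax _ h]; exact hμL
      have := ((nonzero_iff hν _).1 h2).2
      omega
  have hm1ν : m ≤ ν 1 + 1 := by
    have := diag hν hνs 1 r le_rfl hr1 hLνr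
    omega
  set N := n + m - 1 with hN
  set Sv : (ℕ → ℕ) → Set ℕ := fun α => {a | 1 ≤ a ∧ a ≤ Lp μ ∧ Cmul μ a ≤ parts α} with hSv
  set Av : (ℕ → ℕ) → ℕ := fun α => sSup (Sv α) with hAvdef
  set Ψ : (ℕ → ℕ) → ℕ → ℕ :=
    fun α => fromParts (parts α - Cmul μ (Av α) + Cmul ν (Av α)) with hΨdef
  have hΨapp : ∀ α, Ψ α = fromParts (parts α - Cmul μ (Av α) + Cmul ν (Av α)) :=
    fun _ => rfl
  have hspec : ∀ α ∈ PnSetK N μ 1,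
      (1 ≤ Av α ∧ Av α ≤ Lp μ ∧ Cmul μ (Av α) ≤ parts α) ∧
      (∀ b, 1 ≤ b → b ≤ Lp μ → Cmul μ b ≤ parts α → b ≤ Av α) := by
    intro α hα
    rw [mem_PnSetK_iff hμ hμs hLμ1] at hα
    obtain ⟨hP, hw, h1, a, ha1, ha2, hle⟩ := hα
    have hbdd : BddAbove (Sv α) := ⟨Lp μ, fun x hx => hx.2.1⟩
    have hne2 : (Sv α).Nonempty := ⟨a, ha1, ha2, hle⟩
    have hmem : Av α ∈ Sv α := Nat.sSup_mem hne2 hbdd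
    exact ⟨hmem, fun b hb1 hb2 hb3 => le_csSup hbdd ⟨hb1, hb2, hb3⟩⟩
  have hdecomp : ∀ α ∈ PnSetK N μ 1, ∃ β : Multiset ℕ,
      parts α = Cmul μ (Av α) + β ∧ n + Av α + β.sum = N ∧
      parts α - Cmul μ (Av α) + Cmul ν (Av α) = Cmul ν (Av α) + β ∧ (0:ℕ) ∉ β := by
    intro α hα
    obtain ⟨⟨hA1, hA2, hA3⟩, hmax⟩ := hspec α hα
    rw [mem_PnSetK_iff hμ hμs hLμ1] at hα
    obtain ⟨hP, hw, h1, -⟩ := hα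
    obtain ⟨β, hβ⟩ := Multiset.le_iff_exists_add.1 hA3
    refine ⟨β, hβ, ?_, ?_, ?_⟩
    · have hsums := congrArg Multiset.sum hβ
      rw [parts_sum hP, hw, Multiset.sum_add, Cmul_sum hμ hA2, hμn] at hsums
      omega
    · rw [hβ, add_tsub_cancel_left, add_comm]
    · intro h0
      have : (0:ℕ) ∈ parts α := by rw [hβ]; exact Multiset.mem_add.2 (Or.inr h0)
      exact zero_not_mem_parts hP this
  have himg : ∀ α ∈ PnSetK N μ 1, Ψ α ∈ PnSetK N ν 1 := by
    intro α hα
    obtain ⟨⟨hA1, hA2, hA3⟩, hmax⟩ := hspec α hα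
    obtain ⟨β, hβ, hsum, hQ, h0β⟩ := hdecomp α hα
    have hA2ν : Av α ≤ Lp ν := le_trans hA2 hLle
    have h0Q : (0:ℕ) ∉ Cmul ν (Av α) + β := by
      intro h
      rcases Multiset.mem_add.1 h with h | h
      · exact zero_not_mem_Cmul hν h
      · exact h0β h
    have hΨα : Ψ α = fromParts (Cmul ν (Av α) + β) := by rw [hΨapp, hQ]
    have hsumQ : (Cmul ν (Av α) + β).sum = N := by
      rw [Multiset.sum_add, Cmul_sum hν hA2ν, hνn]
      omega
    have hmaxQ : ∀ y ∈ Cmul ν (Av α) + β, y ≤ ν 1 + 1 := by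
      intro y hy
      rcases Multiset.mem_add.1 hy with h | h
      · rw [mem_Cmul] at h
        obtain ⟨i, hi1, hi2, hi3⟩ := h
        have h4 := anti hν 1 i le_rfl hi1
        have h5 : (if i ≤ Av α then 1 else 0) ≤ 1 := by split <;> omega
        omega
      · have := elem_le_sum h
        omega
    have hheadQ : (ν 1 + 1) ∈ Cmul ν (Av α) + β :=
      Multiset.mem_add.2 (Or.inl (mem_Cmul.2 ⟨1, le_rfl, hLν1, by rw [if_pos hA1]⟩))
    rw [mem_PnSetK_iff hν hνs hLν1]
    refine ⟨hΨα ▸ fromParts_partition, ?_, ?_, ⟨Av α, hA1, hA2ν, ?_⟩⟩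
    · rw [hΨα, pweight_fromParts h0Q, hsumQ]
    · rw [hΨα, fromParts_head h0Q hheadQ hmaxQ]
      omega
    · rw [hΨα, parts_fromParts h0Q]
      exact Multiset.le_iff_exists_add.2 ⟨β, by rw [add_comm]⟩
  have hkey : ∀ α1 ∈ PnSetK N μ 1, ∀ α2 ∈ PnSetK N μ 1,
      parts α1 - Cmul μ (Av α1) + Cmul ν (Av α1) =
        parts α2 - Cmul μ (Av α2) + Cmul ν (Av α2) →
      Av α1 < Av α2 → False := by
    intro α1 h1 α2 h2 heq hlt12
    obtain ⟨⟨hA11, hA12, hA13⟩, hmax1⟩ := hspec α1 h1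
    obtain ⟨⟨hA21, hA22, hA23⟩, hmax2⟩ := hspec α2 h2
    obtain ⟨β1, hβ1, hsum1, hQ1, h0β1⟩ := hdecomp α1 h1
    obtain ⟨β2, hβ2, hsum2, hQ2, h0β2⟩ := hdecomp α2 h2
    rw [hQ1, hQ2] at heq
    have hle2 : Cmul ν (Av α2) ≤ Cmul ν (Av α1) + β1 := by
      rw [heq]
      exact Multiset.le_iff_exists_add.2 ⟨β2, rfl⟩
    rcases le_or_gt (Av α1 + 1) r with hcase | hcase
    · have hvβ := nojump hν hνs hA11 hlt12 (le_trans hA22 hLle) hle2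
      have hvs := elem_le_sum hvβ
      have hdiag := diag hν hνs (Av α1 + 1) r (by omega) hcase hLνr
      omega
    · have hswap : Cmul μ (Av α2) ≤ Cmul μ (Av α1) + β1 := by
        rw [Multiset.le_iff_count]
        intro v
        have hcμ := count_swap (l := μ) (v := v) (le_of_lt hlt12) hA22
        have hcν := count_swap (l := ν) (v := v) (le_of_lt hlt12) (le_trans hA22 hLle)
        have hsame1 : ∑ i ∈ Finset.Ioc (Av α1) (Av α2), (if μ i = v then 1 else 0)
            = ∑ i ∈ Finset.Ioc (Av α1) (Av α2), (if ν i = v then 1 else 0) := by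
          apply Finset.sum_congr rfl
          intro i hi
          rw [Finset.mem_Ioc] at hi
          rw [hrmax i (by omega)]
        have hsame2 : ∑ i ∈ Finset.Ioc (Av α1) (Av α2), (if μ i + 1 = v then 1 else 0)
            = ∑ i ∈ Finset.Ioc (Av α1) (Av α2), (if ν i + 1 = v then 1 else 0) := by
          apply Finset.sum_congr rfl
          intro i hi
          rw [Finset.mem_Ioc] at hi
          rw [hrmax i (by omega)]
        have hν2 := Multiset.le_iff_count.1 hle2 v
        rw [Multiset.count_add] at hν2 ⊢
        omega
      have := hmax1 (Av α2) hA21 hA22 (by rw [hβ1]; exact hswap)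
      omega
  have hinj : Set.InjOn Ψ (PnSetK N μ 1) := by
    intro α1 h1 α2 h2 heq
    obtain ⟨β1, hβ1, hsum1, hQ1, h0β1⟩ := hdecomp α1 h1
    obtain ⟨β2, hβ2, hsum2, hQ2, h0β2⟩ := hdecomp α2 h2
    have hP1 : IsPartition α1 := ((mem_PnSetK_iff hμ hμs hLμ1).1 h1).1
    have hP2 : IsPartition α2 := ((mem_PnSetK_iff hμ hμs hLμ1).1 h2).1
    have h0Q1 : (0:ℕ) ∉ parts α1 - Cmul μ (Av α1) + Cmul ν (Av α1) := by
      rw [hQ1]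
      intro h
      rcases Multiset.mem_add.1 h with h | h
      exacts [zero_not_mem_Cmul hν h, h0β1 h]
    have h0Q2 : (0:ℕ) ∉ parts α2 - Cmul μ (Av α2) + Cmul ν (Av α2) := by
      rw [hQ2]
      intro h
      rcases Multiset.mem_add.1 h with h | h
      exacts [zero_not_mem_Cmul hν h, h0β2 h]
    rw [hΨapp, hΨapp] at heq
    have hQeq := congrArg parts heq
    rw [parts_fromParts h0Q1, parts_fromParts h0Q2] at hQeq
    rcases lt_trichotomy (Av α1) (Av α2) with h | h | h
    · exact (hkey α1 h1 α2 h2 hQeq h).elim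
    · rw [hQ1, hQ2, h] at hQeq
      have hββ : β1 = β2 := by
        exact add_left_cancel hQeq
      rw [← fromParts_parts hP1, ← fromParts_parts hP2, hβ1, hβ2, h, hββ]
    · exact (hkey α2 h2 α1 h1 hQeq.symm h).elim
  have hwmem : ∀ (aw : ℕ) (βw : Multiset ℕ), 1 ≤ aw → aw ≤ Lp ν → (0:ℕ) ∉ βw →
      n + aw + βw.sum = N → (∀ y ∈ βw, y ≤ ν 1) →
      fromParts (Cmul ν aw + βw) ∈ PnSetK N ν 1 := by
    intro aw βw ha1 ha2 h0 hsum hyb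
    have h0Q : (0:ℕ) ∉ Cmul ν aw + βw := by
      intro h
      rcases Multiset.mem_add.1 h with h | h
      · exact zero_not_mem_Cmul hν h
      · exact h0 h
    have hsumQ : (Cmul ν aw + βw).sum = N := by
      rw [Multiset.sum_add, Cmul_sum hν ha2, hνn]
      omega
    have hmaxQ : ∀ y ∈ Cmul ν aw + βw, y ≤ ν 1 + 1 := by
      intro y hy
      rcases Multiset.mem_add.1 hy with h | h
      · rw [mem_Cmul] at h
        obtain ⟨i, hi1, hi2, hi3⟩ := h
        have h4 := anti hν 1 i le_rfl hi1
        have h5 : (if i ≤ aw then 1 else 0) ≤ 1 := by split <;> omega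
        omega
      · have := hyb y h
        omega
    have hheadQ : (ν 1 + 1) ∈ Cmul ν aw + βw :=
      Multiset.mem_add.2 (Or.inl (mem_Cmul.2 ⟨1, le_rfl, hLν1, by rw [if_pos ha1]⟩))
    rw [mem_PnSetK_iff hν hνs hLν1]
    refine ⟨fromParts_partition, ?_, ?_, ⟨aw, ha1, ha2, ?_⟩⟩
    · rw [pweight_fromParts h0Q, hsumQ]
    · rw [fromParts_head h0Q hheadQ hmaxQ]
      omega
    · rw [parts_fromParts h0Q]
      exact Multiset.le_iff_exists_add.2 ⟨βw, rfl⟩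
  have hν1p : 1 ≤ ν 1 := Nat.one_le_iff_ne_zero.2 (Lp_pos hν le_rfl hLν1)
  have hwit : ∃ w ∈ PnSetK N ν 1, w ∉ Ψ '' (PnSetK N μ 1) := by
    by_cases hμr : μ r = 0
    · -- witness with aw = r
      set βw : Multiset ℕ := Multiset.replicate (ν r - 1) 1 with hβw
      have h0βw : (0:ℕ) ∉ βw := by
        intro h
        have := Multiset.eq_of_mem_replicate h
        omega
      have hsumβw : βw.sum = ν r - 1 := by
        rw [hβw, Multiset.sum_replicate, smul_eq_mul, mul_one]
      refine ⟨fromParts (Cmul ν r + βw),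
        hwmem r βw hr1 hLνr h0βw (by omega)
          (fun y hy => by
            have := Multiset.eq_of_mem_replicate hy
            omega), ?_⟩
      rintro ⟨α, hα, hΨα⟩
      obtain ⟨⟨hA1, hA2, hA3⟩, hmax⟩ := hspec α hα
      obtain ⟨β, hβ, hsum, hQ, h0β⟩ := hdecomp α hα
      have hLμr : Lp μ < r := by
        by_contra hc
        push_neg at hc
        exact Lp_pos hμ hr1 hc hμr
      have h0Q : (0:ℕ) ∉ Cmul ν (Av α) + β := by
        intro h
        rcases Multiset.mem_add.1 h with h | h
        · exact zero_not_mem_Cmul hν h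
        · exact h0β h
      have h0Qw : (0:ℕ) ∉ Cmul ν r + βw := by
        intro h
        rcases Multiset.mem_add.1 h with h | h
        · exact zero_not_mem_Cmul hν h
        · exact h0βw h
      have heq : Cmul ν (Av α) + β = Cmul ν r + βw := by
        have := congrArg parts hΨα
        rw [hΨapp, hQ] at this
        rwa [parts_fromParts h0Q, parts_fromParts h0Qw] at this
      have hle : Cmul ν r ≤ Cmul ν (Av α) + β := by
        rw [heq]
        exact Multiset.le_iff_exists_add.2 ⟨βw, rfl⟩
      have hvβ := nojump hν hνs hA1 (by omega) hLνr hle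
      have hvs := elem_le_sum hvβ
      have hdiag := diag hν hνs (Av α + 1) r (by omega) (by omega) hLνr
      omega
    · -- witness with aw = r - 1
      have hrLμ : r ≤ Lp μ := ((nonzero_iff hμ r).1 hμr).2
      set βw : Multiset ℕ := (μ r + 1) ::ₘ Multiset.replicate (ν r - μ r - 1) 1 with hβw
      have h0βw : (0:ℕ) ∉ βw := by
        intro h
        rcases Multiset.mem_cons.1 h with h | h
        · omega
        · have := Multiset.eq_of_mem_replicate h
          omega
      have hsumβw : βw.sum = ν r := by
        rw [hβw, Multiset.sum_cons, Multiset.sum_replicate, smul_eq_mul, mul_one]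
        omega
      have hνrν1 : ν r ≤ ν 1 := anti hν 1 r le_rfl hr1
      refine ⟨fromParts (Cmul ν (r - 1) + βw),
        hwmem (r - 1) βw (by omega) (by omega) h0βw (by omega)
          (fun y hy => by
            rcases Multiset.mem_cons.1 hy with h | h
            · omega
            · have := Multiset.eq_of_mem_replicate h
              omega), ?_⟩
      rintro ⟨α, hα, hΨα⟩
      obtain ⟨⟨hA1, hA2, hA3⟩, hmax⟩ := hspec α hα
      obtain ⟨β, hβ, hsum, hQ, h0β⟩ := hdecomp α hα
      have h0Q : (0:ℕ) ∉ Cmul ν (Av α) + β := by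
        intro h
        rcases Multiset.mem_add.1 h with h | h
        · exact zero_not_mem_Cmul hν h
        · exact h0β h
      have h0Qw : (0:ℕ) ∉ Cmul ν (r - 1) + βw := by
        intro h
        rcases Multiset.mem_add.1 h with h | h
        · exact zero_not_mem_Cmul hν h
        · exact h0βw h
      have heq : Cmul ν (Av α) + β = Cmul ν (r - 1) + βw := by
        have := congrArg parts hΨα
        rw [hΨapp, hQ] at this
        rwa [parts_fromParts h0Q, parts_fromParts h0Qw] at this
      rcases lt_trichotomy (Av α) (r - 1) with hc | hc | hc
      · have hle : Cmul ν (r - 1) ≤ Cmul ν (Av α) + β := by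
          rw [heq]
          exact Multiset.le_iff_exists_add.2 ⟨βw, rfl⟩
        have hvβ := nojump hν hνs hA1 (by omega) (by omega) hle
        have hvs := elem_le_sum hvβ
        have hdiag := diag hν hνs (Av α + 1) r (by omega) (by omega) hLνr
        omega
      · -- Av α = r - 1 : show Cmul μ r ≤ parts α, contradicting maximality
        have hββ : β = βw := by
          rw [hc] at heq
          exact add_left_cancel heq
        have hstep : Cmul μ r ≤ Cmul μ (r - 1) + βw := by
          rw [Multiset.le_iff_count]
          intro v
          have hsw := count_swap (l := μ) (v := v) (show r - 1 ≤ r by omega) hrLμ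
          have hIoc : Finset.Ioc (r - 1) r = {r} := by
            ext x
            simp only [Finset.mem_Ioc, Finset.mem_singleton]
            omega
          rw [hIoc, Finset.sum_singleton, Finset.sum_singleton] at hsw
          rw [Multiset.count_add]
          by_cases hv : v = μ r + 1
          · have hcβ : 1 ≤ Multiset.count v βw := by
              rw [hv, hβw]
              exact Multiset.one_le_count_iff_mem.2 (Multiset.mem_cons_self _ _)
            rw [if_pos (show μ r + 1 = v by omega),
                if_neg (show ¬ μ r = v by omega)] at hsw
            omega
          · rw [if_neg (show ¬ μ r + 1 = v by omega)] at hsw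
            omega
        have := hmax r hr1 hrLμ (by rw [hβ, hc, hββ]; exact hstep)
        omega
      · have hle : Cmul ν (Av α) ≤ Cmul ν (r - 1) + βw := by
          rw [← heq]
          exact Multiset.le_iff_exists_add.2 ⟨β, rfl⟩
        have hvβ := nojump hν hνs (show 1 ≤ r - 1 by omega) hc
          (le_trans hA2 hLle) hle
        have hv1 : ν (r - 1 + 1) + 1 = ν r + 1 := by
          congr 2
          omega
        rw [hv1] at hvβ
        rcases Multiset.mem_cons.1 hvβ with h | h
        · omega
        · have := Multiset.eq_of_mem_replicate h
          omega
  obtain ⟨w, hw1, hw2⟩ := hwit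
  have hfin : (PnSetK N ν 1).Finite := by
    apply Set.Finite.subset (finite_weight N)
    intro x hx
    exact ⟨hx.1.1, hx.1.2.1⟩
  have hsub : Ψ '' (PnSetK N μ 1) ⊆ PnSetK N ν 1 := by
    rintro x ⟨α, hα, rfl⟩
    exact himg α hα
  rw [← Set.ncard_image_of_injOn hinj]
  exact Set.ncard_lt_ncard ((Set.ssubset_iff_of_subset hsub).2 ⟨w, hw1, hw2⟩) hfin
end

section
/- Every partition of n ≥ 1 is (i,1)-equivalent to a strict partition. -/
/-!
Proof idea: the largest antidiagonal `D(μ) = max {i + j : (i, j) ∈ μ}` is invariant under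
`(i, 1)`-transforms, because the conjugation `(x, y) ↦ (i + y - 1, 1 + x - i)` preserves `x + y`.
If row `a` reaches that antidiagonal, `a + μ a = D`, the `(a, 1)`-transform produces a partition
whose nonempty rows are exactly `1, …, D - 1`; conjugating it (the `(1, 1)`-transform) gives first
row `D - 1`. The rows below it have a smaller invariant, so by induction they are equivalent to a
strict partition, all of whose parts are `< D - 1`. Each `(i, 1)`-transform of those rows is an
`(i + 1, 1)`-transform of the whole partition, since the first row stays the longest one.
-/

open Set

namespace IsPartition

variable {μ : ℕ → ℕ}

lemma anti (hμ : IsPartition μ) {x y : ℕ} (hx : 1 ≤ x) (hxy : x ≤ y) : μ y ≤ μ x := by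
  induction y, hxy using Nat.le_induction with
  | base => exact le_rfl
  | succ y hxy ih => exact (hμ.2.1 y (hx.trans hxy)).trans ih

lemma finite_board (hμ : IsPartition μ) : (Board μ).Finite := by
  refine (hμ.2.2.prod (finite_Iic (μ 1))).subset ?_
  rintro ⟨x, y⟩ ⟨hx, hy, hyx : y ≤ μ x⟩
  exact ⟨show μ x ≠ 0 by omega, hyx.trans (hμ.anti le_rfl hx)⟩

end IsPartition

lemma eq_of_board_eq {μ ν : ℕ → ℕ} (h0 : μ 0 = ν 0) (h : Board μ = Board ν) : μ = ν := by
  funext x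
  rcases Nat.eq_zero_or_pos x with rfl | hx
  · exact h0
  refine eq_of_forall_le_iff fun y => ?_
  rcases Nat.eq_zero_or_pos y with rfl | hy
  · simp
  have hcell : Cell μ x y ↔ Cell ν x y := Set.ext_iff.mp h (x, y)
  simp only [Cell] at hcell
  constructor <;> intro <;> omega

/-- The length of column `k` of the subdiagram of `μ` formed by the rows `i, i + 1, …`. -/
noncomputable def tailColLen (μ : ℕ → ℕ) (i k : ℕ) : ℕ := ncard {a | i ≤ a ∧ k ≤ μ a}

/-- Conjugate the rows `i, i + 1, …` of `μ`: the explicit `(i, 1)`-transform. -/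
noncomputable def conjTail (i : ℕ) (μ : ℕ → ℕ) : ℕ → ℕ :=
  fun x => if x < i then μ x else tailColLen μ i (x - i + 1)

section ConjTail

variable {μ : ℕ → ℕ} {i : ℕ}

lemma conjTail_of_lt {x : ℕ} (hx : x < i) : conjTail i μ x = μ x := if_pos hx

lemma conjTail_of_le {x : ℕ} (hx : i ≤ x) : conjTail i μ x = tailColLen μ i (x - i + 1) :=
  if_neg (not_lt.mpr hx)

lemma IsPartition.finite_tail (hμ : IsPartition μ) (i : ℕ) {k : ℕ} (hk : 1 ≤ k) :
    {a | i ≤ a ∧ k ≤ μ a}.Finite :=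
  hμ.2.2.subset fun a ha => by simp only [mem_ofPred_eq] at *; omega

lemma IsPartition.le_iff_lt_add_tailColLen (hμ : IsPartition μ) (hi : 1 ≤ i) {k a : ℕ}
    (hk : 1 ≤ k) (ha : i ≤ a) : k ≤ μ a ↔ a < i + tailColLen μ i k := by
  constructor
  · intro h
    have hsub : Icc i a ⊆ {x | i ≤ x ∧ k ≤ μ x} := fun x hx =>
      ⟨hx.1, h.trans (hμ.anti (hi.trans hx.1) hx.2)⟩
    have := ncard_le_ncard hsub (hμ.finite_tail i hk)
    rw [← Finset.coe_Icc, ncard_coe_finset, Nat.card_Icc] at this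
    unfold tailColLen
    omega
  · intro h
    by_contra! hlt
    have hsub : {x | i ≤ x ∧ k ≤ μ x} ⊆ Ico i a := fun x ⟨hix, hkx⟩ =>
      ⟨hix, lt_of_not_ge fun hax => by have := hμ.anti (hi.trans ha) hax; omega⟩
    have := ncard_le_ncard hsub (finite_Ico i a)
    rw [← Finset.coe_Ico, ncard_coe_finset, Nat.card_Ico] at this
    unfold tailColLen at h
    omega

lemma IsPartition.board_conjTail (hμ : IsPartition μ) (hi : 1 ≤ i) :
    Board (conjTail i μ) = (Board μ \ {p ∈ Board μ | i ≤ p.1 ∧ 1 ≤ p.2}) ∪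
      (fun p : ℕ × ℕ => (i + (p.2 - 1), 1 + (p.1 - i))) '' {p ∈ Board μ | i ≤ p.1 ∧ 1 ≤ p.2} := by
  ext ⟨x, y⟩
  simp only [Board, Cell, mem_ofPred_eq, mem_union, mem_sdiff, mem_image,
    Prod.exists, Prod.mk.injEq]
  constructor
  · rintro ⟨hx, hy, hyx⟩
    by_cases hxi : x < i
    · rw [conjTail_of_lt hxi] at hyx
      exact Or.inl ⟨⟨hx, hy, hyx⟩, by omega⟩
    · rw [conjTail_of_le (not_lt.mp hxi)] at hyx
      refine Or.inr ⟨i + (y - 1), x - i + 1, ⟨⟨by omega, by omega, ?_⟩, by omega, by omega⟩,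
        by omega, by omega⟩
      exact (hμ.le_iff_lt_add_tailColLen hi (by omega) (by omega)).mpr (by omega)
  · rintro (⟨⟨hx, hy, hyx⟩, hnot⟩ | ⟨a, b, ⟨⟨-, hb, hba⟩, hia, -⟩, rfl, rfl⟩)
    · have hxi : x < i := by by_contra hxi; exact hnot ⟨⟨hx, hy, hyx⟩, by omega, hy⟩
      exact ⟨hx, hy, (conjTail_of_lt hxi).symm ▸ hyx⟩
    · refine ⟨by omega, by omega, ?_⟩
      rw [conjTail_of_le (by omega), show i + (b - 1) - i + 1 = b by omega]
      have := (hμ.le_iff_lt_add_tailColLen hi hb hia).mp hba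
      omega

lemma IsPartition.conjTail (hμ : IsPartition μ) (hi : 1 ≤ i)
    (hv : 2 ≤ i → tailColLen μ i 1 ≤ μ (i - 1)) : IsPartition (conjTail i μ) := by
  refine ⟨(conjTail_of_lt hi).trans hμ.1, fun x hx => ?_, ?_⟩
  · rcases lt_trichotomy (x + 1) i with h | h | h
    · rw [conjTail_of_lt h, conjTail_of_lt (by omega)]
      exact hμ.2.1 x hx
    · rw [conjTail_of_le h.ge, conjTail_of_lt (by omega), show x + 1 - i + 1 = 1 by omega,
        show x = i - 1 by omega]
      exact hv (by omega)
    · rw [conjTail_of_le (by omega), conjTail_of_le (by omega)]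
      exact ncard_le_ncard (fun a ⟨hia, ha⟩ => ⟨hia, by omega⟩) (hμ.finite_tail i (by omega))
  · refine (hμ.2.2.union (finite_Iio (i + μ i))).subset fun x hx => ?_
    by_cases hxi : x < i
    · exact Or.inl ((conjTail_of_lt hxi).symm.trans_ne hx)
    · rw [mem_ofPred_eq, conjTail_of_le (not_lt.mp hxi)] at hx
      obtain ⟨a, hia, ha⟩ := nonempty_of_ncard_ne_zero hx
      have := hμ.anti hi hia
      exact Or.inr (show x < i + μ i by omega)

lemma IsTransform.eq_conjTail {ν : ℕ → ℕ} (h : IsTransform i 1 μ ν) : ν = conjTail i μ := by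
  obtain ⟨hμ, hν, hi, -, hb⟩ := h
  exact eq_of_board_eq (hν.1.trans ((conjTail_of_lt hi).trans hμ.1).symm)
    (hb.trans (hμ.board_conjTail hi).symm)

lemma isTransform_conjTail_iff :
    IsTransform i 1 μ (conjTail i μ) ↔ IsPartition μ ∧ IsPartition (conjTail i μ) ∧ 1 ≤ i :=
  ⟨fun h => ⟨h.1, h.2.1, h.2.2.1⟩, fun ⟨hμ, hT, hi⟩ => ⟨hμ, hT, hi, le_rfl, hμ.board_conjTail hi⟩⟩

end ConjTail

/-- The largest antidiagonal `i + j` meeting the Ferrers board of `μ` (`0` for the empty board). -/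
noncomputable def maxAntidiag (μ : ℕ → ℕ) : ℕ := sSup ((fun p : ℕ × ℕ => p.1 + p.2) '' Board μ)

section MaxAntidiag

variable {μ ν : ℕ → ℕ}

lemma IsPartition.add_le_maxAntidiag (hμ : IsPartition μ) {p : ℕ × ℕ} (hp : p ∈ Board μ) :
    p.1 + p.2 ≤ maxAntidiag μ :=
  le_csSup (hμ.finite_board.image _).bddAbove ⟨p, hp, rfl⟩

lemma IsPartition.le_maxAntidiag_sub (hμ : IsPartition μ) {x : ℕ} (hx : 1 ≤ x) :
    μ x ≤ maxAntidiag μ - x := by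
  rcases Nat.eq_zero_or_pos (μ x) with h | h
  · omega
  · have := hμ.add_le_maxAntidiag (p := (x, μ x)) ⟨hx, h, le_rfl⟩
    omega

lemma IsPartition.exists_add_eq_maxAntidiag (hμ : IsPartition μ) (h1 : μ 1 ≠ 0) :
    ∃ a, 1 ≤ a ∧ 1 ≤ μ a ∧ a + μ a = maxAntidiag μ := by
  have hne : ((fun p : ℕ × ℕ => p.1 + p.2) '' Board μ).Nonempty :=
    ⟨_, (1, 1), ⟨le_rfl, le_rfl, Nat.one_le_iff_ne_zero.mpr h1⟩, rfl⟩
  obtain ⟨⟨a, b⟩, ⟨ha : 1 ≤ a, hb : 1 ≤ b, hba : b ≤ μ a⟩, hab : a + b = maxAntidiag μ⟩ :=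
    Nat.sSup_mem hne (hμ.finite_board.image _).bddAbove
  have := hμ.le_maxAntidiag_sub ha
  exact ⟨a, ha, by omega, by omega⟩

lemma IsTransform.maxAntidiag_eq {i : ℕ} (h : IsTransform i 1 μ ν) :
    maxAntidiag ν = maxAntidiag μ := by
  obtain ⟨-, -, -, -, hb⟩ := h
  have hsum : ∀ p ∈ {p ∈ Board μ | i ≤ p.1 ∧ 1 ≤ p.2},
      (fun q : ℕ × ℕ => q.1 + q.2) ((fun p : ℕ × ℕ => (i + (p.2 - 1), 1 + (p.1 - i))) p)
        = (fun q : ℕ × ℕ => q.1 + q.2) p := by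
    rintro ⟨a, b⟩ ⟨-, ha, hb⟩
    dsimp only
    omega
  unfold maxAntidiag
  rw [hb, image_union, image_image, image_congr hsum, ← image_union,
    sdiff_union_of_subset (sep_subset _ _)]

lemma TransformEquiv1.maxAntidiag_eq (h : TransformEquiv1 μ ν) :
    maxAntidiag ν = maxAntidiag μ := by
  induction h with
  | refl => rfl
  | tail _ hstep ih => exact hstep.choose_spec.maxAntidiag_eq.trans ih

lemma IsPartition.tailColLen_one_le (hμ : IsPartition μ) {i : ℕ} (hi : 1 ≤ i) :
    tailColLen μ i 1 ≤ maxAntidiag μ - i := by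
  have hsub : {a | i ≤ a ∧ 1 ≤ μ a} ⊆ Ico i (maxAntidiag μ) := fun a ⟨hia, ha⟩ =>
    ⟨hia, by have := hμ.le_maxAntidiag_sub (hi.trans hia); omega⟩
  have := ncard_le_ncard hsub (finite_Ico _ _)
  rwa [← Finset.coe_Ico, ncard_coe_finset, Nat.card_Ico] at this

end MaxAntidiag

def consRow (c : ℕ) (τ : ℕ → ℕ) : ℕ → ℕ
  | 0 => 0
  | 1 => c
  | x + 2 => τ (x + 1)

def dropRow (μ : ℕ → ℕ) : ℕ → ℕ
  | 0 => 0
  | x + 1 => μ (x + 2)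

section Rows

variable {μ τ ρ : ℕ → ℕ} {c : ℕ}

lemma consRow_dropRow (h0 : μ 0 = 0) : consRow (μ 1) (dropRow μ) = μ := by
  funext x
  match x with
  | 0 => exact h0.symm
  | 1 => rfl
  | _ + 2 => rfl

lemma IsPartition.dropRow (hμ : IsPartition μ) : IsPartition (dropRow μ) := by
  refine ⟨rfl, fun x hx => ?_, ?_⟩
  · cases x with
    | zero => omega
    | succ x => exact hμ.2.1 (x + 2) (by omega)
  · refine (hμ.2.2.image (· - 1)).subset fun x hx => ?_
    cases x with
    | zero => exact absurd rfl hx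
    | succ x => exact ⟨x + 2, hx, rfl⟩

lemma IsPartition.consRow (hτ : IsPartition τ) (hc : τ 1 ≤ c) : IsPartition (consRow c τ) := by
  refine ⟨rfl, fun x hx => ?_, ?_⟩
  · match x with
    | 1 => exact hc
    | x + 2 => exact hτ.2.1 (x + 1) (by omega)
  · refine (((hτ.2.2.image (· + 1)).insert 1)).subset fun x hx => ?_
    match x with
    | 0 => exact absurd rfl hx
    | 1 => exact mem_insert 1 _
    | x + 2 => exact Or.inr ⟨x + 1, hx, rfl⟩

lemma IsStrict.consRow (hs : IsStrict τ) (hτ : IsPartition τ) (hc : τ 1 < c) :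
    IsStrict (consRow c τ) := by
  intro i j hi hij hj
  match i, j with
  | 1, j + 2 => exact (hτ.anti le_rfl (by omega)).trans_lt hc
  | i + 2, j + 2 => exact hs (i + 1) (j + 1) (by omega) (by omega) hj

lemma maxAntidiag_dropRow_le (hμ : IsPartition μ) :
    maxAntidiag (dropRow μ) ≤ maxAntidiag μ - 1 := by
  refine csSup_le' ?_
  rintro _ ⟨⟨_ | a, b⟩, ⟨ha, hb, hba⟩, rfl⟩
  · exact absurd ha (Nat.not_succ_le_zero 0)
  have := hμ.add_le_maxAntidiag (p := (a + 2, b)) ⟨by omega, hb, hba⟩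
  dsimp only at this ⊢
  omega

lemma tailColLen_consRow {i : ℕ} (hi : 1 ≤ i) (k : ℕ) :
    tailColLen (consRow c τ) (i + 1) k = tailColLen τ i k := by
  have hset : {a | i + 1 ≤ a ∧ k ≤ consRow c τ a} = (· + 1) '' {a | i ≤ a ∧ k ≤ τ a} := by
    ext x
    constructor
    · rintro ⟨hix, hkx⟩
      obtain ⟨y, rfl⟩ : ∃ y, x = y + 2 := ⟨x - 2, by omega⟩
      exact ⟨y + 1, ⟨by omega, hkx⟩, rfl⟩
    · rintro ⟨y, ⟨hiy, hky⟩, rfl⟩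
      obtain ⟨z, rfl⟩ : ∃ z, y = z + 1 := ⟨y - 1, by omega⟩
      exact ⟨show i + 1 ≤ z + 2 by omega, hky⟩
  rw [tailColLen, hset, ncard_image_of_injective _ (add_left_injective 1), tailColLen]

lemma consRow_conjTail {i : ℕ} (hi : 1 ≤ i) :
    consRow c (conjTail i τ) = conjTail (i + 1) (consRow c τ) := by
  funext x
  match x with
  | 0 => exact (conjTail_of_lt (μ := consRow c τ) (i := i + 1) (x := 0) (by omega)).symm
  | 1 => exact (conjTail_of_lt (μ := consRow c τ) (i := i + 1) (x := 1) (by omega)).symm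
  | x + 2 =>
    by_cases hxi : x + 1 < i
    · rw [conjTail_of_lt (by omega : x + 2 < i + 1)]
      exact conjTail_of_lt hxi
    · rw [conjTail_of_le (by omega : i + 1 ≤ x + 2), tailColLen_consRow hi]
      exact (conjTail_of_le (by omega)).trans (by congr 1; omega)

lemma IsTransform.consRow {i : ℕ} (h : IsTransform i 1 τ ρ) (hτ : τ 1 ≤ c) (hρ : ρ 1 ≤ c) :
    IsTransform (i + 1) 1 (consRow c τ) (consRow c ρ) := by
  have hρ_eq := h.eq_conjTail
  obtain ⟨hτP, hρP, hi, -, -⟩ := h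
  have hρ' := hρP.consRow hρ
  rw [hρ_eq, consRow_conjTail hi] at hρ' ⊢
  exact isTransform_conjTail_iff.mpr ⟨hτP.consRow hτ, hρ', by omega⟩

lemma TransformEquiv1.consRow {τ' : ℕ → ℕ} (h : TransformEquiv1 τ τ')
    (hc : maxAntidiag τ ≤ c + 1) : TransformEquiv1 (consRow c τ) (consRow c τ') := by
  induction h with
  | refl => exact Relation.ReflTransGen.refl
  | @tail ρ ρ' hτρ hstep ih =>
    obtain ⟨i, hρρ'⟩ := hstep
    have hρ := hρρ'.1.le_maxAntidiag_sub le_rfl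
    have hρ' := hρρ'.2.1.le_maxAntidiag_sub le_rfl
    rw [hρρ'.maxAntidiag_eq, TransformEquiv1.maxAntidiag_eq hτρ] at hρ'
    rw [TransformEquiv1.maxAntidiag_eq hτρ] at hρ
    exact ih.tail ⟨i + 1, hρρ'.consRow (by omega) (by omega)⟩

end Rows

section Strictify

variable {μ : ℕ → ℕ}

lemma conjTail_ne_zero_iff (hμ : IsPartition μ) {a x : ℕ} (ha : 1 ≤ a)
    (hμa : μ a ≠ 0) (hx : 1 ≤ x) : conjTail a μ x ≠ 0 ↔ x < a + μ a := by
  by_cases hxa : x < a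
  · have := hμ.anti hx hxa.le
    rw [conjTail_of_lt hxa]
    omega
  · have := hμ.le_iff_lt_add_tailColLen ha (k := x - a + 1) (by omega) le_rfl
    rw [conjTail_of_le (not_lt.mp hxa)]
    omega

lemma exists_transformEquiv1_part_one_eq (hμ : IsPartition μ) (h1 : μ 1 ≠ 0) :
    ∃ ρ, IsPartition ρ ∧ TransformEquiv1 μ ρ ∧ ρ 1 = maxAntidiag μ - 1 := by
  obtain ⟨a, ha, hμa, hD⟩ := hμ.exists_add_eq_maxAntidiag h1
  have hσ : IsPartition (conjTail a μ) := hμ.conjTail ha fun ha2 => by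
    -- the nonempty rows from `a` on have index `< a + μ a`: at most `μ a ≤ μ (a - 1)` of them
    have := hμ.tailColLen_one_le ha
    have := hμ.anti (x := a - 1) (by omega) (Nat.sub_le a 1)
    omega
  have hρ : IsPartition (conjTail 1 (conjTail a μ)) := hσ.conjTail le_rfl (by omega)
  have hrows : {x | 1 ≤ x ∧ 1 ≤ conjTail a μ x} = Ico 1 (a + μ a) := by
    ext x
    simp only [mem_ofPred_eq, mem_Ico]
    constructor
    · rintro ⟨hx, hσx⟩
      exact ⟨hx, (conjTail_ne_zero_iff hμ ha (by omega) hx).mp (by omega)⟩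
    · rintro ⟨hx, hxa⟩
      exact ⟨hx, Nat.one_le_iff_ne_zero.mpr ((conjTail_ne_zero_iff hμ ha (by omega) hx).mpr hxa)⟩
  refine ⟨_, hρ, .tail (.single ⟨a, isTransform_conjTail_iff.mpr ⟨hμ, hσ, ha⟩⟩)
    ⟨1, isTransform_conjTail_iff.mpr ⟨hσ, hρ, le_rfl⟩⟩, ?_⟩
  rw [conjTail_of_le le_rfl, tailColLen, hrows, ← Finset.coe_Ico, ncard_coe_finset, Nat.card_Ico]
  omega

theorem exists_isStrict_transformEquiv1 (hμ : IsPartition μ) :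
    ∃ ν, IsPartition ν ∧ IsStrict ν ∧ TransformEquiv1 μ ν := by
  induction hD : maxAntidiag μ using Nat.strong_induction_on generalizing μ with
  | _ D ih =>
  by_cases h1 : μ 1 = 0
  · exact ⟨μ, hμ, fun i j hi hij hj => absurd (hμ.anti le_rfl (by omega : 1 ≤ j)) (by omega),
      .refl⟩
  obtain ⟨ρ, hρ, hμρ, hρ1⟩ := exists_transformEquiv1_part_one_eq hμ h1
  have hD2 : 1 + 1 ≤ D :=
    hD ▸ hμ.add_le_maxAntidiag (p := (1, 1)) ⟨le_rfl, le_rfl, show 1 ≤ μ 1 by omega⟩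
  have hτ : maxAntidiag (dropRow ρ) ≤ D - 1 :=
    (maxAntidiag_dropRow_le hρ).trans (by rw [hμρ.maxAntidiag_eq, hD])
  obtain ⟨τ', hτ', hs, hττ'⟩ := ih _ (by omega) hρ.dropRow rfl
  have hτ'1 := hτ'.le_maxAntidiag_sub le_rfl
  rw [hττ'.maxAntidiag_eq] at hτ'1
  refine ⟨consRow (ρ 1) τ', hτ'.consRow (by omega), hs.consRow hτ' (by omega), hμρ.trans ?_⟩
  conv_lhs => rw [← consRow_dropRow hρ.1]
  exact hττ'.consRow (by omega)

end Strictify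

theorem equiv1_to_strict_general (μ : ℕ → ℕ) (hμ : IsPartition μ) :
    ∃ ν : ℕ → ℕ, IsPartition ν ∧ IsStrict ν ∧ TransformEquiv1 μ ν :=
  exists_isStrict_transformEquiv1 hμ

theorem equiv1_to_strict (n : ℕ) (hn : 1 ≤ n) (μ : ℕ → ℕ)
    (hμ : IsPartition μ) (hμn : pweight μ = n) :
    ∃ ν : ℕ → ℕ, IsPartition ν ∧ IsStrict ν ∧ TransformEquiv1 μ ν :=
  equiv1_to_strict_general μ hμ
end

section
/- Let μ be a partition with staircase rank k. Then the map i ↦ i + μ_i is injective on the set of non-salient rows of μ, and its image on this set is exactly the set of integers {t : t ≥ k + 1}; that is, N_μ = [k+1, ∞). -/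
/-!
Write `f i = i + μ i`. A row is non-salient exactly when `f` is strictly larger at every later
row, so distinct non-salient rows have distinct values of `f`. The staircase rank `k` is the
largest `k` with `f i ≥ k + 1` on `1 ≤ i ≤ k`; as also `f i ≥ i`, the minimum of `f` over all
rows is `k + 1`. Since `μ` is weakly decreasing, `f` climbs by at most one per row, so for every
`t ≥ k + 1` the last row `m` with `f m ≤ t` has `f m = t`, and it is non-salient.
-/

theorem not_salient_iff {μ : ℕ → ℕ} {i : ℕ} :
    ¬ Salient μ i ↔ ∀ j, i < j → i + μ i < j + μ j := by
  simp [Salient]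

theorem injOn_add_of_not_salient (μ : ℕ → ℕ) :
    Set.InjOn (fun i => i + μ i) {i | ¬ Salient μ i} := by
  intro a ha b hb hab
  rcases lt_trichotomy a b with h | h | h
  · exact absurd hab (not_salient_iff.mp ha b h).ne
  · exact h
  · exact absurd hab (not_salient_iff.mp hb a h).ne'

theorem IsPartition.add_succ_le {μ : ℕ → ℕ} (hμ : IsPartition μ) {i : ℕ} (hi : 1 ≤ i) :
    (i + 1) + μ (i + 1) ≤ i + μ i + 1 := by
  have := hμ.2.1 i hi
  omega

theorem exists_last_eq_of_map_succ_le {f : ℕ → ℕ} {a t : ℕ}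
    (hstep : ∀ i, a ≤ i → f (i + 1) ≤ f i + 1) (ha : f a ≤ t)
    (hbdd : BddAbove {i | f i ≤ t}) :
    ∃ m, a ≤ m ∧ f m = t ∧ ∀ j, m < j → t < f j := by
  set S := {i | a ≤ i ∧ f i ≤ t}
  have hS : BddAbove S := hbdd.mono fun i hi => hi.2
  obtain ⟨ham, hfm⟩ : sSup S ∈ S := Nat.sSup_mem ⟨a, le_rfl, ha⟩ hS
  have hafter : ∀ j, sSup S < j → t < f j := fun j hj => by
    by_contra! hfj
    exact (le_csSup hS ⟨by omega, hfj⟩).not_gt hj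
  have hnext : t < f (sSup S + 1) := hafter _ (Nat.lt_add_one _)
  have hclimb := hstep _ ham
  exact ⟨sSup S, ham, by omega, hafter⟩

section StaircaseRank

variable (μ : ℕ → ℕ)

theorem bddAbove_staircaseRank_set :
    BddAbove {k | ∀ i, 1 ≤ i → i ≤ k → k + 1 ≤ μ i + i} := by
  refine ⟨μ 1, fun k hk => ?_⟩
  rcases Nat.eq_zero_or_pos k with rfl | hk0
  · exact Nat.zero_le _
  · have := hk 1 le_rfl hk0
    omega

theorem staircaseRank_spec {i : ℕ} (hi : 1 ≤ i) (hik : i ≤ staircaseRank μ) :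
    staircaseRank μ + 1 ≤ μ i + i :=
  Nat.sSup_mem ⟨0, fun i hi hi0 => by omega⟩ (bddAbove_staircaseRank_set μ) i hi hik

theorem staircaseRank_succ_le_add {i : ℕ} (hi : 1 ≤ i) : staircaseRank μ + 1 ≤ i + μ i := by
  rcases le_or_gt i (staircaseRank μ) with hik | hik
  · have := staircaseRank_spec μ hi hik
    omega
  · omega

theorem exists_add_le_staircaseRank_succ : ∃ i, 1 ≤ i ∧ i + μ i ≤ staircaseRank μ + 1 := by
  have hnot : staircaseRank μ + 1 ∉ {k | ∀ i, 1 ≤ i → i ≤ k → k + 1 ≤ μ i + i} := fun h =>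
    (le_csSup (bddAbove_staircaseRank_set μ) h).not_gt (Nat.lt_add_one _)
  simp only [Set.mem_ofPred_eq, not_forall, not_le] at hnot
  obtain ⟨i, hi, -, hlt⟩ := hnot
  exact ⟨i, hi, by omega⟩

end StaircaseRank

theorem nonsalient_values (μ : ℕ → ℕ) (hμ : IsPartition μ)
    (k : ℕ) (hk : staircaseRank μ = k) :
    Set.InjOn (fun i => i + μ i) {i | 1 ≤ i ∧ ¬ Salient μ i} ∧
      (fun i => i + μ i) '' {i | 1 ≤ i ∧ ¬ Salient μ i} = {t | k + 1 ≤ t} := by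
  subst hk
  refine ⟨(injOn_add_of_not_salient μ).mono fun i hi => hi.2, ?_⟩
  ext t
  constructor
  · rintro ⟨i, ⟨hi, -⟩, rfl⟩
    exact staircaseRank_succ_le_add μ hi
  · intro ht
    obtain ⟨a, ha, hat⟩ := exists_add_le_staircaseRank_succ μ
    obtain ⟨m, ham, hmt, hafter⟩ := exists_last_eq_of_map_succ_le (f := fun i => i + μ i)
      (fun i hai => hμ.add_succ_le (ha.trans hai)) (hat.trans ht)
      ⟨t, fun i (hi : i + μ i ≤ t) => by omega⟩
    exact ⟨m, ⟨ha.trans ham, not_salient_iff.mpr fun j hj => hmt ▸ hafter j hj⟩, hmt⟩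
end

section
/- If ν is an (i,j)-transform of a partition μ, then μ and ν have the same staircase rank. -/
/-! The condition `k ≤ staircaseRank μ` only asks that the antidiagonal `x + y = k + 1` lie in
the board of `μ`. The `(i, j)`-transform reflects the quadrant southeast of `(i, j)` in a line
parallel to the main diagonal, which maps every antidiagonal into itself; as the reflection is an
involution, so is the transform, and an antidiagonal lies in the board of `μ` iff it lies in the
board of `ν`. -/

namespace Set

variable {α : Type*} (Q : Set α) (f : α → α)

def replaceOn (B : Set α) : Set α := (B \ Q) ∪ f '' (B ∩ Q)

variable {Q f}

lemma replaceOn_replaceOn (hQ : MapsTo f Q Q) (hf : LeftInvOn f f Q) (B : Set α) :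
    replaceOn Q f (replaceOn Q f B) = B := by
  have hout : replaceOn Q f B \ Q = B \ Q := by
    ext x
    constructor
    · rintro ⟨hx | ⟨y, hy, rfl⟩, hxQ⟩
      exacts [hx, absurd (hQ hy.2) hxQ]
    · exact fun hx => ⟨Or.inl hx, hx.2⟩
  have hin : replaceOn Q f B ∩ Q = f '' (B ∩ Q) := by
    ext x
    constructor
    · rintro ⟨hx | hx, hxQ⟩
      exacts [absurd hxQ hx.2, hx]
    · rintro ⟨y, hy, rfl⟩
      exact ⟨Or.inr ⟨y, hy, rfl⟩, hQ hy.2⟩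
  rw [replaceOn, hout, hin, (hf.mono inter_subset_right).image_image, sdiff_union_inter]

lemma subset_replaceOn (hQ : MapsTo f Q Q) (hf : LeftInvOn f f Q) {S B : Set α} (hSB : S ⊆ B)
    (hS : MapsTo f (S ∩ Q) S) : S ⊆ replaceOn Q f B := by
  intro x hx
  by_cases hxQ : x ∈ Q
  · exact Or.inr ⟨f x, ⟨hSB (hS ⟨hx, hxQ⟩), hQ hxQ⟩, hf hxQ⟩
  · exact Or.inl ⟨hSB hx, hxQ⟩

end Set

open Set

def quadrant (i j : ℕ) : Set (ℕ × ℕ) := {p | i ≤ p.1 ∧ j ≤ p.2}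

/-- The reflection of `quadrant i j` in its diagonal line through `(i, j)`. -/
def quadrantReflect (i j : ℕ) (p : ℕ × ℕ) : ℕ × ℕ := (i + (p.2 - j), j + (p.1 - i))

lemma mapsTo_quadrantReflect (i j : ℕ) :
    MapsTo (quadrantReflect i j) (quadrant i j) (quadrant i j) :=
  fun _ _ => ⟨Nat.le_add_right _ _, Nat.le_add_right _ _⟩

lemma leftInvOn_quadrantReflect (i j : ℕ) :
    LeftInvOn (quadrantReflect i j) (quadrantReflect i j) (quadrant i j) := by
  rintro ⟨x, y⟩ ⟨hx, hy⟩
  simp only [quadrantReflect, Prod.mk.injEq]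
  omega

lemma transformBoard_eq_replaceOn (i j : ℕ) (B : Set (ℕ × ℕ)) :
    (B \ {p ∈ B | i ≤ p.1 ∧ j ≤ p.2}) ∪
      (fun p : ℕ × ℕ => (i + (p.2 - j), j + (p.1 - i))) '' {p ∈ B | i ≤ p.1 ∧ j ≤ p.2} =
    replaceOn (quadrant i j) (quadrantReflect i j) B := by
  rw [replaceOn, ← sdiff_self_inter (s := B) (t := quadrant i j)]
  rfl

lemma IsTransform.board_eq_replaceOn {i j : ℕ} {μ ν : ℕ → ℕ} (h : IsTransform i j μ ν) :
    Board ν = replaceOn (quadrant i j) (quadrantReflect i j) (Board μ) :=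
  h.2.2.2.2.trans (transformBoard_eq_replaceOn i j _)

lemma IsTransform.symm {i j : ℕ} {μ ν : ℕ → ℕ} (h : IsTransform i j μ ν) :
    IsTransform i j ν μ := by
  refine ⟨h.2.1, h.1, h.2.2.1, h.2.2.2.1, ?_⟩
  rw [transformBoard_eq_replaceOn, h.board_eq_replaceOn,
    replaceOn_replaceOn (mapsTo_quadrantReflect i j) (leftInvOn_quadrantReflect i j)]

def antidiagonalCells (n : ℕ) : Set (ℕ × ℕ) := {p | 1 ≤ p.1 ∧ 1 ≤ p.2 ∧ p.1 + p.2 = n}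

lemma mapsTo_quadrantReflect_antidiagonalCells {i j : ℕ} (hi : 1 ≤ i) (hj : 1 ≤ j) (n : ℕ) :
    MapsTo (quadrantReflect i j) (antidiagonalCells n ∩ quadrant i j) (antidiagonalCells n) := by
  rintro ⟨x, y⟩ ⟨⟨hx, hy, hn⟩, hxi, hyj⟩
  refine ⟨?_, ?_, ?_⟩ <;> dsimp only [quadrantReflect] at * <;> omega

lemma staircase_condition_iff_antidiagonalCells_subset (μ : ℕ → ℕ) (k : ℕ) :
    (∀ x, 1 ≤ x → x ≤ k → k + 1 ≤ μ x + x) ↔ antidiagonalCells (k + 1) ⊆ Board μ := by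
  constructor
  · rintro h ⟨x, y⟩ ⟨hx, hy, hn⟩
    have := h x hx (by omega)
    exact ⟨hx, hy, show y ≤ μ x by omega⟩
  · intro h x hx hxk
    have hcell : Cell μ x (k + 1 - x) := @h (x, k + 1 - x) ⟨hx, by omega, by omega⟩
    have := hcell.2.2
    omega

lemma IsTransform.antidiagonalCells_subset {i j : ℕ} {μ ν : ℕ → ℕ} (h : IsTransform i j μ ν)
    {n : ℕ} (hn : antidiagonalCells n ⊆ Board μ) : antidiagonalCells n ⊆ Board ν := by
  rw [h.board_eq_replaceOn]
  exact subset_replaceOn (mapsTo_quadrantReflect i j) (leftInvOn_quadrantReflect i j) hn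
    (mapsTo_quadrantReflect_antidiagonalCells h.2.2.1 h.2.2.2.1 n)

theorem staircase_rank_invariant (i j : ℕ) (μ ν : ℕ → ℕ)
    (h : IsTransform i j μ ν) :
    staircaseRank μ = staircaseRank ν := by
  unfold staircaseRank
  congr 1
  ext k
  simp only [mem_ofPred_eq, staircase_condition_iff_antidiagonalCells_subset]
  exact ⟨h.antidiagonalCells_subset, h.symm.antidiagonalCells_subset⟩
end

section
/- Partitions μ and ν of the same positive integer n are rook equivalent if and only if S_μ = S_ν as multisets. -/
/-!
By the Goldman–Joichi–White factorization, the rook numbers `r_k` of the Ferrers board of `μ`,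
padded to `m` rows, are the coefficients of `∏_{i ≤ m} (x + i + μ i)` in the falling-factorial
basis `(x + m)^{\underline{m - k}}`. So `μ` and `ν` are rook equivalent iff the multisets
`{i + μ i : 1 ≤ i ≤ m}` agree, `i + μ i` being the anti-diagonal through the last cell of row `i`.

Row `i` is non-salient iff `i + μ i` is a strict minimum of the tail `(j + μ j)_{j ≥ i}`. Since
`i + μ i` grows by at most one per step and equals `i` for large `i`, the non-salient rows among
the first `m` take every value of `[c, m]` exactly once, where `c` is the least `i + μ i`. Hence
`{i + μ i} = S_μ + [c, m]`; conversely `c` is recovered as the least element of the left side,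
or from `S_μ` by counting: `m = |S_μ| + (m + 1 - c)`.
-/

open Finset Polynomial

namespace Rook

def IsNonattacking (s : Finset (ℕ × ℕ)) : Prop :=
  Set.InjOn Prod.fst (s : Set (ℕ × ℕ)) ∧ Set.InjOn Prod.snd (s : Set (ℕ × ℕ))

open scoped Classical in
noncomputable def placements (B : Finset (ℕ × ℕ)) (k : ℕ) : Finset (Finset (ℕ × ℕ)) :=
  {s ∈ B.powersetCard k | IsNonattacking s}

noncomputable def rookNumber (B : Finset (ℕ × ℕ)) (k : ℕ) : ℕ := #(placements B k)

section RookNumber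

variable {B s : Finset (ℕ × ℕ)} {k r : ℕ} {C : Finset ℕ}

theorem isNonattacking_iff :
    IsNonattacking s ↔ ∀ p ∈ s, ∀ q ∈ s, p ≠ q → p.1 ≠ q.1 ∧ p.2 ≠ q.2 := by
  refine ⟨fun ⟨h₁, h₂⟩ p hp q hq hpq => ⟨fun h => hpq (h₁ hp hq h), fun h => hpq (h₂ hp hq h)⟩,
    fun h => ⟨fun p hp q hq hpq => ?_, fun p hp q hq hpq => ?_⟩⟩ <;>
  · by_contra hne
    have := h p hp q hq hne
    tauto

theorem mem_placements : s ∈ placements B k ↔ s ⊆ B ∧ #s = k ∧ IsNonattacking s := by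
  simp [placements, and_assoc]

theorem rookNumber_zero (B : Finset (ℕ × ℕ)) : rookNumber B 0 = 1 :=
  card_eq_one.2 ⟨∅, by ext s; simp [mem_placements, IsNonattacking]; aesop⟩

theorem rookNumber_empty_succ (k : ℕ) : rookNumber ∅ (k + 1) = 0 := by
  simp [rookNumber, placements]

theorem le_card_of_rookNumber_ne_zero_of_fst_mem {R : Finset ℕ} (hR : ∀ p ∈ B, p.1 ∈ R)
    (h : rookNumber B k ≠ 0) : k ≤ #R := by
  obtain ⟨s, hs⟩ := card_ne_zero.1 h
  obtain ⟨hsB, rfl, hna⟩ := mem_placements.1 hs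
  exact card_le_card_of_injOn _ (fun p hp => hR p (hsB hp)) hna.1

theorem le_card_of_rookNumber_ne_zero_of_snd_mem (hC : ∀ p ∈ B, p.2 ∈ C)
    (h : rookNumber B k ≠ 0) : k ≤ #C := by
  obtain ⟨s, hs⟩ := card_ne_zero.1 h
  obtain ⟨hsB, rfl, hna⟩ := mem_placements.1 hs
  exact card_le_card_of_injOn _ (fun p hp => hC p (hsB hp)) hna.2

theorem filter_placements_union_row_avoiding (hB : ∀ p ∈ B, p.1 ≠ r) :
    {s ∈ placements ({r} ×ˢ C ∪ B) k | ∀ p ∈ s, p.1 ≠ r} = placements B k := by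
  ext s
  simp only [mem_filter, mem_placements]
  constructor
  · rintro ⟨⟨hs, hk, hna⟩, hr⟩
    refine ⟨fun p hp => ?_, hk, hna⟩
    rcases mem_union.1 (hs hp) with hrow | hpB
    · exact absurd (mem_singleton.1 (mem_product.1 hrow).1) (hr p hp)
    · exact hpB
  · rintro ⟨hs, hk, hna⟩
    exact ⟨⟨hs.trans subset_union_right, hk, hna⟩, fun p hp => hB p (hs hp)⟩

theorem insert_mem_placements_union_row (hB : ∀ p ∈ B, p.1 ≠ r ∧ p.2 ∈ C) {c : ℕ}
    (hs : s ∈ placements B k) (hc : c ∈ C) (hcs : c ∉ s.image Prod.snd) :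
    insert (r, c) s ∈ placements ({r} ×ˢ C ∪ B) (k + 1) := by
  obtain ⟨hsB, rfl, hna⟩ := mem_placements.1 hs
  have hrs : (r, c) ∉ s := fun h => (hB _ (hsB h)).1 rfl
  refine mem_placements.2 ⟨insert_subset (by simp [hc]) (hsB.trans subset_union_right),
    card_insert_of_notMem hrs, ?_⟩
  simp only [IsNonattacking, coe_insert, Set.injOn_insert (mem_coe.not.2 hrs)]
  refine ⟨⟨hna.1, ?_⟩, ⟨hna.2, ?_⟩⟩
  · rintro ⟨p, hp, hpr⟩
    exact (hB p (hsB hp)).1 hpr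
  · rintro ⟨p, hp, hpc⟩
    exact hcs (mem_image.2 ⟨p, hp, hpc⟩)

theorem eq_and_eq_of_insert_eq_insert {s' : Finset (ℕ × ℕ)} {c c' : ℕ}
    (hs : ∀ p ∈ s, p.1 ≠ r) (hs' : ∀ p ∈ s', p.1 ≠ r) (h : insert (r, c) s = insert (r, c') s') :
    s = s' ∧ c = c' := by
  have hc : c = c' := by
    rcases mem_insert.1 (h ▸ mem_insert_self (r, c) s) with h | h
    · exact (Prod.ext_iff.1 h).2
    · exact absurd rfl (hs' _ h)
  subst hc
  refine ⟨?_, rfl⟩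
  rw [← erase_insert fun h => hs (r, c) h rfl, h, erase_insert fun h => hs' (r, c) h rfl]

theorem erase_mem_placements_of_mem_placements_union_row (hB : ∀ p ∈ B, p.1 ≠ r ∧ p.2 ∈ C)
    (hs : s ∈ placements ({r} ×ˢ C ∪ B) (k + 1)) {p : ℕ × ℕ} (hp : p ∈ s) (hpr : p.1 = r) :
    s.erase p ∈ placements B k ∧ p.2 ∈ C \ (s.erase p).image Prod.snd := by
  obtain ⟨hsB, hk, hna⟩ := mem_placements.1 hs
  have herase : s.erase p ⊆ B := fun q hq => by
    obtain ⟨hqp, hq⟩ := mem_erase.1 hq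
    rcases mem_union.1 (hsB hq) with h | h
    · exact absurd (hna.1 hq hp ((mem_singleton.1 (mem_product.1 h).1).trans hpr.symm)) hqp
    · exact h
  refine ⟨mem_placements.2 ⟨herase, by rw [card_erase_of_mem hp, hk, Nat.add_sub_cancel],
    hna.1.mono (by simp), hna.2.mono (by simp)⟩, mem_sdiff.2 ⟨?_, fun hmem => ?_⟩⟩
  · rcases mem_union.1 (hsB hp) with h | h
    · exact (mem_product.1 h).2
    · exact absurd hpr (hB p h).1
  · obtain ⟨q, hq, hqp⟩ := mem_image.1 hmem
    obtain ⟨hne, hq⟩ := mem_erase.1 hq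
    exact hne (hna.2 hq hp hqp)

theorem card_filter_placements_union_row_meeting (hB : ∀ p ∈ B, p.1 ≠ r ∧ p.2 ∈ C) :
    #{s ∈ placements ({r} ×ˢ C ∪ B) (k + 1) | ¬ ∀ p ∈ s, p.1 ≠ r} =
      (#C - k) * rookNumber B k := by
  classical
  have hcols : ∀ s ∈ placements B k, #(C \ s.image Prod.snd) = #C - k := by
    intro s hs
    obtain ⟨hsB, rfl, hna⟩ := mem_placements.1 hs
    rw [card_sdiff_of_subset (fun c hc => ?_), card_image_of_injOn hna.2]
    obtain ⟨p, hp, rfl⟩ := mem_image.1 hc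
    exact (hB p (hsB hp)).2
  have havoid : ∀ {t}, t ∈ placements B k → ∀ p ∈ t, p.1 ≠ r := fun ht p hp =>
    (hB p ((mem_placements.1 ht).1 hp)).1
  rw [rookNumber, mul_comm, ← sum_const_nat hcols, ← card_sigma]
  symm
  refine card_bij (fun a _ => insert (r, a.2) a.1) (fun ⟨s, c⟩ ha => ?_)
    (fun ⟨s, c⟩ ha ⟨s', c'⟩ ha' h => ?_) fun s hs => ?_
  · obtain ⟨hs, hc⟩ := mem_sigma.1 ha
    exact mem_filter.2 ⟨insert_mem_placements_union_row hB hs (mem_sdiff.1 hc).1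
      (mem_sdiff.1 hc).2, fun h => h _ (mem_insert_self _ _) rfl⟩
  · obtain ⟨rfl, rfl⟩ :=
      eq_and_eq_of_insert_eq_insert (havoid (mem_sigma.1 ha).1) (havoid (mem_sigma.1 ha').1) h
    rfl
  · obtain ⟨hs, hrow⟩ := mem_filter.1 hs
    simp only [not_forall, not_not] at hrow
    obtain ⟨p, hp, hpr⟩ := hrow
    refine ⟨⟨s.erase p, p.2⟩,
      mem_sigma.2 (erase_mem_placements_of_mem_placements_union_row hB hs hp hpr), ?_⟩
    rw [← hpr, Prod.mk.eta, insert_erase hp]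

theorem rookNumber_union_row_succ (hB : ∀ p ∈ B, p.1 ≠ r ∧ p.2 ∈ C) :
    rookNumber ({r} ×ˢ C ∪ B) (k + 1) = rookNumber B (k + 1) + (#C - k) * rookNumber B k := by
  classical
  rw [rookNumber, ← card_filter_add_card_filter_not (fun s => ∀ p ∈ s, p.1 ≠ r),
    filter_placements_union_row_avoiding fun p hp => (hB p hp).1,
    card_filter_placements_union_row_meeting hB]
  rfl

end RookNumber

def rowsBoard (μ : ℕ → ℕ) (r m : ℕ) : Finset (ℕ × ℕ) :=
  (Icc r m).biUnion fun i => {i} ×ˢ Icc 1 (μ i)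

section RowsBoard

variable {μ : ℕ → ℕ} {r m : ℕ}

theorem mem_rowsBoard {p : ℕ × ℕ} :
    p ∈ rowsBoard μ r m ↔ (r ≤ p.1 ∧ p.1 ≤ m) ∧ 1 ≤ p.2 ∧ p.2 ≤ μ p.1 := by
  obtain ⟨i, j⟩ := p
  simp [rowsBoard]

theorem rowsBoard_eq_union (h : r ≤ m) :
    rowsBoard μ r m = {r} ×ˢ Icc 1 (μ r) ∪ rowsBoard μ (r + 1) m := by
  rw [rowsBoard, ← insert_Icc_add_one_left_eq_Icc h, biUnion_insert, rowsBoard]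

theorem mem_rowsBoard_succ (hμ : AntitoneOn μ (Set.Ici 1)) (hr : 1 ≤ r) {p : ℕ × ℕ}
    (hp : p ∈ rowsBoard μ (r + 1) m) : p.1 ≠ r ∧ p.2 ∈ Icc 1 (μ r) := by
  obtain ⟨⟨hrp, -⟩, hp1, hp2⟩ := mem_rowsBoard.1 hp
  exact ⟨by omega, mem_Icc.2 ⟨hp1,
    hp2.trans (hμ (Set.mem_Ici.2 hr) (Set.mem_Ici.2 (by omega)) (by omega))⟩⟩

theorem rookNumber_rowsBoard_succ (hμ : AntitoneOn μ (Set.Ici 1)) (hr : 1 ≤ r) (h : r ≤ m)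
    (k : ℕ) :
    rookNumber (rowsBoard μ r m) (k + 1) = rookNumber (rowsBoard μ (r + 1) m) (k + 1) +
      (μ r - k) * rookNumber (rowsBoard μ (r + 1) m) k := by
  rw [rowsBoard_eq_union h, rookNumber_union_row_succ fun p => mem_rowsBoard_succ hμ hr,
    Nat.card_Icc, Nat.add_sub_cancel]

theorem le_of_rookNumber_rowsBoard_ne_zero {k : ℕ} (h : rookNumber (rowsBoard μ r m) k ≠ 0) :
    k ≤ m + 1 - r := by
  simpa using le_card_of_rookNumber_ne_zero_of_fst_mem
    (fun p hp => mem_Icc.2 (mem_rowsBoard.1 hp).1) h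

theorem le_of_rookNumber_rowsBoard_succ_ne_zero (hμ : AntitoneOn μ (Set.Ici 1)) (hr : 1 ≤ r) {k : ℕ}
    (h : rookNumber (rowsBoard μ (r + 1) m) k ≠ 0) : k ≤ μ r := by
  simpa using le_card_of_rookNumber_ne_zero_of_snd_mem
    (fun p hp => (mem_rowsBoard_succ hμ hr hp).2) h

theorem rookCount_eq_rookNumber_rowsBoard (hm : ∀ i, m < i → μ i = 0) (k : ℕ) :
    rookCount μ k = rookNumber (rowsBoard μ 1 m) k := by
  rw [rookCount, rookNumber, ← Set.ncard_coe_finset]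
  congr 1
  ext s
  simp only [Set.mem_ofPred_eq, mem_coe, mem_placements, isNonattacking_iff]
  refine ⟨fun ⟨hk, hcell, hna⟩ => ⟨fun p hp => ?_, hk, hna⟩,
    fun ⟨hs, hk, hna⟩ => ⟨hk, fun p hp => ?_, hna⟩⟩
  · obtain ⟨h1, h2, h3⟩ := hcell p hp
    have : p.1 ≤ m := by
      by_contra hlt
      have := hm p.1 (by omega)
      omega
    exact mem_rowsBoard.2 ⟨⟨h1, this⟩, h2, h3⟩
  · obtain ⟨⟨h1, -⟩, h2, h3⟩ := mem_rowsBoard.1 (hs hp)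
    exact ⟨h1, h2, h3⟩

end RowsBoard

section Factorization

variable {R : Type*} [CommRing R] {μ : ℕ → ℕ} {r m : ℕ}

/-- The factor of row `r` splits as `(x + r + k) + (μ r - k)`: the first summand extends the
falling factorial by one step, the second counts the columns of row `r` left free by `k` rooks
on the rows below. -/
theorem mul_rookNumber_rowsBoard_succ_mul_eval (hμ : AntitoneOn μ (Set.Ici 1)) (hr : 1 ≤ r)
    (hrm : r ≤ m) (x : R) (k : ℕ) :
    (x + ((r + μ r : ℕ) : R)) * ((rookNumber (rowsBoard μ (r + 1) m) k : R) *
        (descPochhammer R (m - r - k)).eval (x + m)) =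
      (rookNumber (rowsBoard μ (r + 1) m) k : R) *
          (descPochhammer R (m + 1 - r - k)).eval (x + m) +
        ((μ r - k : ℕ) : R) * ((rookNumber (rowsBoard μ (r + 1) m) k : R) *
          (descPochhammer R (m - r - k)).eval (x + m)) := by
  by_cases h : rookNumber (rowsBoard μ (r + 1) m) k = 0
  · simp [h]
  have hkμ := le_of_rookNumber_rowsBoard_succ_ne_zero hμ hr h
  have hkm := le_of_rookNumber_rowsBoard_ne_zero h
  rw [show m + 1 - r - k = m - r - k + 1 by omega, descPochhammer_succ_eval,
    Nat.cast_sub hkμ, Nat.cast_sub (by omega : k ≤ m - r), Nat.cast_sub hrm]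
  push_cast
  ring

/-- The Goldman–Joichi–White factorization for the rows `r, …, m` of `μ`. -/
theorem prod_rows_eq_sum_rookNumber_mul_descPochhammer (hμ : AntitoneOn μ (Set.Ici 1))
    (hr : 1 ≤ r) (hrm : r ≤ m + 1) (x : R) :
    ∏ i ∈ Icc r m, (x + ((i + μ i : ℕ) : R)) =
      ∑ k ∈ range (m + 1), (rookNumber (rowsBoard μ r m) k : R) *
        (descPochhammer R (m + 1 - r - k)).eval (x + m) := by
  induction hrm using Nat.decreasingInduction with
  | self =>
    have hempty : rowsBoard μ (m + 1) m = ∅ := by simp [rowsBoard]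
    simp [sum_range_succ', hempty, rookNumber_empty_succ, rookNumber_zero]
  | of_succ r hrm ih =>
    have hrm : r ≤ m := Nat.lt_succ_iff.1 hrm
    have htop : rookNumber (rowsBoard μ (r + 1) m) m = 0 := by
      by_contra h
      have := le_of_rookNumber_rowsBoard_ne_zero h
      omega
    rw [← insert_Icc_add_one_left_eq_Icc hrm, prod_insert (by simp), ih (by omega),
      Nat.add_sub_add_right, mul_sum,
      sum_congr rfl fun k _ => mul_rookNumber_rowsBoard_succ_mul_eval hμ hr hrm x k,
      sum_add_distrib,
      sum_range_succ' _ m, sum_range_succ _ m, htop, sum_range_succ' _ m]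
    have hidx : ∀ k, m + 1 - r - (k + 1) = m - r - k := fun k => by omega
    simp only [rookNumber_rowsBoard_succ hμ hr hrm, rookNumber_zero, hidx, Nat.cast_zero, zero_mul,
      mul_zero, add_zero, Nat.cast_add, Nat.cast_mul, add_mul, sum_add_distrib, mul_assoc]
    ring

end Factorization

/-- At `x = j` the terms with `t - k > j` vanish, and those with `t - k < j` vanish by
induction on `j`, leaving `c (t - j) * j!`. -/
theorem eq_zero_of_forall_sum_mul_descPochhammer_eq_zero {R : Type*} [Ring R] [NoZeroDivisors R]
    [CharZero R] {t : ℕ} {c : ℕ → R}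
    (h : ∀ x : R, ∑ k ∈ range (t + 1), c k * (descPochhammer R (t - k)).eval x = 0)
    {k : ℕ} (hk : k ≤ t) : c k = 0 := by
  suffices ∀ j ≤ t, c (t - j) = 0 by
    simpa [Nat.sub_sub_self hk] using this (t - k) (Nat.sub_le _ _)
  intro j
  induction j using Nat.strong_induction_on with
  | _ j ih =>
  intro hj
  have hx := h j
  rw [sum_eq_single (t - j), Nat.sub_sub_self hj, descPochhammer_eval_eq_descFactorial,
    Nat.descFactorial_self] at hx
  · exact (mul_eq_zero.1 hx).resolve_right (Nat.cast_ne_zero.2 j.factorial_ne_zero)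
  · intro i hi hij
    have hi : i ≤ t := Nat.lt_succ_iff.1 (mem_range.1 hi)
    rcases lt_or_gt_of_ne (show t - i ≠ j by omega) with hlt | hgt
    · rw [← Nat.sub_sub_self hi, ih (t - i) hlt (by omega), zero_mul]
    · rw [descPochhammer_eval_eq_descFactorial, Nat.descFactorial_eq_zero_iff_lt.2 hgt,
        Nat.cast_zero, mul_zero]
  · intro hj'
    exact absurd (mem_range.2 (by omega)) hj'

theorem _root_.Multiset.eq_of_forall_prod_map_add_eq {R : Type*} [CommRing R] [IsDomain R]
    [Infinite R] {s t : Multiset R} (h : ∀ x, (s.map (x + ·)).prod = (t.map (x + ·)).prod) :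
    s = t := by
  let p : Multiset R → R[X] := fun u => ((u.map Neg.neg).map fun b => X - C b).prod
  have heval : ∀ u x, (p u).eval x = (u.map (x + ·)).prod := by
    intro u x
    simp [p, eval_multiset_prod, Multiset.map_map]
  have hroots := congrArg roots (Polynomial.funext fun x => by rw [heval, heval, h] : p s = p t)
  simp only [p, roots_multiset_prod_X_sub_C] at hroots
  exact Multiset.map_injective neg_injective hroots

def endDiagonals (μ : ℕ → ℕ) (m : ℕ) : Multiset ℕ := (Icc 1 m).val.map fun i => i + μ i

theorem prod_endDiagonals_eq_sum_rookNumber {μ : ℕ → ℕ} (hμ : AntitoneOn μ (Set.Ici 1)) (m : ℕ)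
    (y : ℤ) :
    ((endDiagonals μ m).map fun a : ℕ => y + (a : ℤ)).prod =
      ∑ k ∈ range (m + 1), (rookNumber (rowsBoard μ 1 m) k : ℤ) *
        (descPochhammer ℤ (m - k)).eval (y + m) := by
  rw [endDiagonals, Multiset.map_map, ← prod_eq_multiset_prod]
  exact prod_rows_eq_sum_rookNumber_mul_descPochhammer hμ le_rfl (by omega) y

theorem rookEquiv_iff_endDiagonals_eq {μ ν : ℕ → ℕ} {m : ℕ} (hμ : AntitoneOn μ (Set.Ici 1))
    (hν : AntitoneOn ν (Set.Ici 1)) (hμm : ∀ i, m < i → μ i = 0) (hνm : ∀ i, m < i → ν i = 0) :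
    RookEquiv μ ν ↔ endDiagonals μ m = endDiagonals ν m := by
  simp only [RookEquiv, rookCount_eq_rookNumber_rowsBoard hμm,
    rookCount_eq_rookNumber_rowsBoard hνm]
  constructor
  · intro h
    refine Multiset.map_injective Nat.cast_injective
      (Multiset.eq_of_forall_prod_map_add_eq (R := ℤ) fun y => ?_)
    simp only [Multiset.map_map, Function.comp_def, prod_endDiagonals_eq_sum_rookNumber hμ,
      prod_endDiagonals_eq_sum_rookNumber hν, h]
  · intro h k
    by_cases hk : k ≤ m
    · have := eq_zero_of_forall_sum_mul_descPochhammer_eq_zero (R := ℤ) (t := m)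
        (c := fun k => (rookNumber (rowsBoard μ 1 m) k : ℤ) - rookNumber (rowsBoard ν 1 m) k)
        (fun x => by
          have hx := prod_endDiagonals_eq_sum_rookNumber hμ m (x - m)
          rw [h, prod_endDiagonals_eq_sum_rookNumber hν, sub_add_cancel] at hx
          simp only [sub_mul, sum_sub_distrib, hx, sub_self]) hk
      exact_mod_cast sub_eq_zero.1 this
    · have hzero : ∀ κ : ℕ → ℕ, rookNumber (rowsBoard κ 1 m) k = 0 := fun κ => by
        by_contra h
        have := le_of_rookNumber_rowsBoard_ne_zero h
        omega
      rw [hzero μ, hzero ν]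

noncomputable def minEndDiagonal (μ : ℕ → ℕ) : ℕ := sInf ((fun i => i + μ i) '' Set.Ici 1)

open scoped Classical in
noncomputable def salientEndDiagonals (μ : ℕ → ℕ) (m : ℕ) : Multiset ℕ :=
  ((Icc 1 m).filter (Salient μ)).val.map fun i => i + μ i

section Salient

variable {μ : ℕ → ℕ} {m : ℕ}

theorem minEndDiagonal_le {i : ℕ} (hi : 1 ≤ i) : minEndDiagonal μ ≤ i + μ i :=
  Nat.sInf_le ⟨i, hi, rfl⟩

theorem exists_add_eq_minEndDiagonal : ∃ i, 1 ≤ i ∧ i + μ i = minEndDiagonal μ :=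
  Nat.sInf_mem (Set.nonempty_Ici.image _)

theorem injOn_not_salient : Set.InjOn (fun i => i + μ i) {i | ¬ Salient μ i} := by
  intro i hi j hj hij
  by_contra hne
  rcases lt_or_gt_of_ne hne with h | h
  · exact hi ⟨j, h, hij.symm.le⟩
  · exact hj ⟨i, h, hij.le⟩

theorem le_of_salient (hm : ∀ i, m < i → μ i = 0) {i : ℕ} (h : Salient μ i) : i ≤ m := by
  obtain ⟨j, hij, hj⟩ := h
  by_contra hlt
  have := hm i (by omega)
  have := hm j (by omega)
  omega

theorem exists_not_salient (hμ : AntitoneOn μ (Set.Ici 1)) {v : ℕ} (hv : minEndDiagonal μ ≤ v) :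
    ∃ i, 1 ≤ i ∧ ¬ Salient μ i ∧ i + μ i = v := by
  classical
  obtain ⟨i₀, hi₀, hi₀v⟩ := exists_add_eq_minEndDiagonal (μ := μ)
  -- the witness is the last row whose end diagonal is at most `v`
  let P := fun i => 1 ≤ i ∧ i + μ i ≤ v
  have hP : P (Nat.findGreatest P v) := Nat.findGreatest_spec (m := i₀) (by omega) ⟨hi₀, by omega⟩
  have hgt : ∀ j, Nat.findGreatest P v < j → v < j + μ j := fun j hij => by
    by_contra hle
    exact Nat.findGreatest_is_greatest hij (by omega) ⟨by omega, by omega⟩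
  generalize Nat.findGreatest P v = i at hP hgt
  refine ⟨i, hP.1, fun ⟨j, hij, hj⟩ => ?_, ?_⟩
  · have := hgt j hij
    omega
  · have := hgt (i + 1) (by omega)
    have := hμ (Set.mem_Ici.2 hP.1) (Set.mem_Ici.2 (by omega)) (by omega : i ≤ i + 1)
    omega

theorem image_filter_not_salient (hμ : AntitoneOn μ (Set.Ici 1))
    (hm : ∀ i ∈ Icc 1 m, i + μ i ≤ m) [DecidablePred (Salient μ)] :
    ((Icc 1 m).filter (¬ Salient μ ·)).image (fun i => i + μ i) = Icc (minEndDiagonal μ) m := by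
  ext v
  simp only [mem_image, mem_filter, mem_Icc]
  constructor
  · rintro ⟨i, ⟨hi, -⟩, rfl⟩
    exact ⟨minEndDiagonal_le hi.1, hm i (mem_Icc.2 hi)⟩
  · rintro ⟨hcv, hvm⟩
    obtain ⟨i, hi, hns, rfl⟩ := exists_not_salient hμ hcv
    exact ⟨i, ⟨⟨hi, by omega⟩, hns⟩, rfl⟩

theorem endDiagonals_eq_salientEndDiagonals_add (hμ : AntitoneOn μ (Set.Ici 1))
    (hm : ∀ i ∈ Icc 1 m, i + μ i ≤ m) :
    endDiagonals μ m = salientEndDiagonals μ m + (Icc (minEndDiagonal μ) m).val := by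
  classical
  rw [← image_filter_not_salient hμ hm, image_val_of_injOn, salientEndDiagonals, endDiagonals,
    filter_val, filter_val, ← Multiset.map_add, Multiset.filter_add_not]
  exact injOn_not_salient.mono fun i hi => (mem_filter.1 hi).2

theorem minEndDiagonal_le_of_mem_endDiagonals {v : ℕ} (hv : v ∈ endDiagonals μ m) :
    minEndDiagonal μ ≤ v := by
  obtain ⟨i, hi, rfl⟩ := Multiset.mem_map.1 hv
  exact minEndDiagonal_le (mem_Icc.1 hi).1

theorem minEndDiagonal_mem_endDiagonals (hc : minEndDiagonal μ ≤ m) :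
    minEndDiagonal μ ∈ endDiagonals μ m := by
  obtain ⟨i, hi, hic⟩ := exists_add_eq_minEndDiagonal (μ := μ)
  exact Multiset.mem_map.2 ⟨i, mem_Icc.2 ⟨hi, by omega⟩, hic⟩

theorem count_salientEndDiagonals (hm : ∀ i, m < i → μ i = 0) (v : ℕ) :
    (salientEndDiagonals μ m).count v = salientCount μ v := by
  classical
  rw [salientEndDiagonals, Multiset.count_map, salientCount, ← filter_val, card_val,
    ← Set.ncard_coe_finset]
  congr 1
  ext i
  simp only [coe_filter, mem_filter, mem_Icc, Set.mem_ofPred_eq]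
  constructor
  · rintro ⟨⟨⟨h1, -⟩, h2⟩, rfl⟩
    exact ⟨h1, h2, rfl⟩
  · rintro ⟨h1, h2, rfl⟩
    exact ⟨⟨⟨h1, le_of_salient hm h2⟩, h2⟩, rfl⟩

end Salient

theorem endDiagonals_eq_iff_salientEndDiagonals_eq {μ ν : ℕ → ℕ} {m : ℕ} (hm : 1 ≤ m)
    (hμ : AntitoneOn μ (Set.Ici 1)) (hν : AntitoneOn ν (Set.Ici 1))
    (hμm : ∀ i ∈ Icc 1 m, i + μ i ≤ m) (hνm : ∀ i ∈ Icc 1 m, i + ν i ≤ m) :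
    endDiagonals μ m = endDiagonals ν m ↔ salientEndDiagonals μ m = salientEndDiagonals ν m := by
  have hμc : minEndDiagonal μ ≤ m := (minEndDiagonal_le le_rfl).trans (hμm 1 (by simp [hm]))
  have hνc : minEndDiagonal ν ≤ m := (minEndDiagonal_le le_rfl).trans (hνm 1 (by simp [hm]))
  constructor
  · intro h
    have hc : minEndDiagonal μ = minEndDiagonal ν := le_antisymm
      (minEndDiagonal_le_of_mem_endDiagonals (h ▸ minEndDiagonal_mem_endDiagonals hνc))
      (minEndDiagonal_le_of_mem_endDiagonals (h ▸ minEndDiagonal_mem_endDiagonals hμc))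
    rw [endDiagonals_eq_salientEndDiagonals_add hμ hμm,
      endDiagonals_eq_salientEndDiagonals_add hν hνm, hc] at h
    exact add_right_cancel h
  · intro h
    have hcard := congrArg Multiset.card (endDiagonals_eq_salientEndDiagonals_add hμ hμm)
    have hcard' := congrArg Multiset.card (endDiagonals_eq_salientEndDiagonals_add hν hνm)
    simp only [endDiagonals, Multiset.card_map, card_val, Multiset.card_add, Nat.card_Icc, h]
      at hcard hcard'
    rw [endDiagonals_eq_salientEndDiagonals_add hμ hμm,
      endDiagonals_eq_salientEndDiagonals_add hν hνm, h,
      show minEndDiagonal μ = minEndDiagonal ν by omega]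

theorem forall_salientCount_eq_iff {μ ν : ℕ → ℕ} {m : ℕ} (hμm : ∀ i, m < i → μ i = 0)
    (hνm : ∀ i, m < i → ν i = 0) :
    (∀ v, salientCount μ v = salientCount ν v) ↔
      salientEndDiagonals μ m = salientEndDiagonals ν m := by
  simp only [Multiset.ext, count_salientEndDiagonals hμm, count_salientEndDiagonals hνm]

end Rook

open Filter

theorem IsPartition.antitoneOn {μ : ℕ → ℕ} (hμ : IsPartition μ) : AntitoneOn μ (Set.Ici 1) :=
  antitoneOn_nat_Ici_of_succ_le hμ.2.1

theorem IsPartition.eventually_eq_zero_and_add_le {μ : ℕ → ℕ} (hμ : IsPartition μ) :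
    ∀ᶠ m in atTop, (∀ i, m < i → μ i = 0) ∧ ∀ i ∈ Icc 1 m, i + μ i ≤ m := by
  obtain ⟨N, hN⟩ := hμ.2.2.bddAbove
  have hzero : ∀ i, N < i → μ i = 0 := fun i hi => by
    by_contra h
    exact absurd (hN h) (by omega)
  refine eventually_atTop.2
    ⟨N + μ 1, fun m hm => ⟨fun i hi => hzero i (by omega), fun i hi => ?_⟩⟩
  obtain ⟨hi1, him⟩ := mem_Icc.1 hi
  by_cases hiN : i ≤ N
  · have := hμ.antitoneOn (Set.mem_Ici.2 le_rfl) (Set.mem_Ici.2 hi1) hi1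
    omega
  · rw [hzero i (by omega)]
    omega

theorem rook_equiv_iff_salient_multiset_general (μ ν : ℕ → ℕ)
    (hμ : IsPartition μ) (hν : IsPartition ν) :
    RookEquiv μ ν ↔ ∀ v : ℕ, salientCount μ v = salientCount ν v := by
  obtain ⟨m, ⟨hμ₀, hμm⟩, ⟨hν₀, hνm⟩, hm⟩ := (hμ.eventually_eq_zero_and_add_le.and
    (hν.eventually_eq_zero_and_add_le.and (eventually_ge_atTop 1))).exists
  rw [Rook.rookEquiv_iff_endDiagonals_eq hμ.antitoneOn hν.antitoneOn hμ₀ hν₀,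
    Rook.endDiagonals_eq_iff_salientEndDiagonals_eq hm hμ.antitoneOn hν.antitoneOn hμm hνm,
    Rook.forall_salientCount_eq_iff hμ₀ hν₀]

theorem rook_equiv_iff_salient_multiset (n : ℕ) (hn : 1 ≤ n) (μ ν : ℕ → ℕ)
    (hμ : IsPartition μ) (hν : IsPartition ν)
    (hμn : pweight μ = n) (hνn : pweight ν = n) :
    RookEquiv μ ν ↔ ∀ v : ℕ, salientCount μ v = salientCount ν v :=
  rook_equiv_iff_salient_multiset_general μ ν hμ hν
end
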